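/- arXiv:1804.04972 — 8 statements merged into one kernel-verified Lean document; each statement's English description precedes it below -/
import Mathlib

section
/- There exists a unique power series Ψ ∈ T + T²ℤ[[T]] satisfying the functional equation Σ_{j=0}^∞ p^{−j} Ψ(p^j T)^{q^j} = T in ℚ[[T]]. -/
/-!
Comparing coefficients of `T^n`, the functional equation reads
`a_n + ∑_{j ≥ 1} p^{j(n-1)} [T^n] Ψ^{q^j} = [n = 1]`, an identity of integers. Since `Ψ` has
no constant term and `q^j ≥ 2`, the coefficient `[T^n] Ψ^{q^j}` only involves `a_k` with
`k < n`, so the equation determines `a_n` recursively, and the solution exists, is unique and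
has integer coefficients.
-/

open PowerSeries Filter

/-- The functional equation `∑_{j≥0} p^{-j} Ψ(p^j T)^{q^j} = T` in `ℚ[[T]]`, read
coefficientwise (for each `n`, only the finitely many terms with `q^j ≤ n` contribute,
so the sum over `j ∈ range (n+1)` is the full sum), together with the normalization
`Ψ ∈ T + T²ℤ[[T]]`. -/
def IsPsi (p q : ℕ) (Ψ : PowerSeries ℤ) : Prop :=
  PowerSeries.constantCoeff Ψ = 0 ∧ PowerSeries.coeff 1 Ψ = 1 ∧
  ∀ n : ℕ,
    (∑ j ∈ Finset.range (n + 1),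
      ((p : ℚ) ^ j)⁻¹ *
        PowerSeries.coeff n
          ((PowerSeries.rescale ((p : ℚ) ^ j) (Ψ.map (Int.castRingHom ℚ))) ^ (q ^ j)))
      = PowerSeries.coeff n (PowerSeries.X : PowerSeries ℚ)

theorem pow_succ_dvd_pow_sub_pow {R : Type*} [CommRing R] {x a b : R} {n m : ℕ}
    (ha : x ∣ a) (hb : x ∣ b) (hab : x ^ n ∣ a - b) (hm : 2 ≤ m) :
    x ^ (n + 1) ∣ a ^ m - b ^ m := by
  have hsum : x ∣ ∑ i ∈ Finset.range m, a ^ i * b ^ (m - 1 - i) := by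
    refine Finset.dvd_sum fun i _ => ?_
    rcases Nat.eq_zero_or_pos i with rfl | hi0
    · exact Dvd.dvd.mul_left (dvd_pow hb (by omega)) _
    · exact Dvd.dvd.mul_right (dvd_pow ha hi0.ne') _
  rw [← (Commute.all a b).mul_geom_sum₂, pow_succ]
  exact mul_dvd_mul hab hsum

namespace PowerSeries

section Causal

variable {R : Type*} [Semiring R]

noncomputable def causalFixCoeff (G : R⟦X⟧ → ℕ → R) : ℕ → R
  | n => G (mk fun k => if _ : k < n then causalFixCoeff G k else 0) n

variable {G : R⟦X⟧ → ℕ → R} (hG0 : ∀ φ, G φ 0 = 0)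
  (hG : ∀ φ ψ n, constantCoeff φ = 0 → constantCoeff ψ = 0 →
    (∀ k < n, coeff k φ = coeff k ψ) → G φ n = G ψ n)
include hG0 hG

theorem coeff_causalFixCoeff (n : ℕ) :
    coeff n (mk (causalFixCoeff G)) = G (mk (causalFixCoeff G)) n := by
  rw [coeff_mk, causalFixCoeff]
  refine hG _ _ n ?_ ?_ fun k hk => by simp [hk]
  · rw [← coeff_zero_eq_constantCoeff_apply, coeff_mk]
    split_ifs
    · rw [causalFixCoeff, hG0]
    · rfl
  · rw [← coeff_zero_eq_constantCoeff_apply, coeff_mk, causalFixCoeff, hG0]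

theorem eq_of_forall_coeff_eq_causal {φ ψ : R⟦X⟧} (hφ : ∀ n, coeff n φ = G φ n)
    (hψ : ∀ n, coeff n ψ = G ψ n) : φ = ψ := by
  have hφ0 : constantCoeff φ = 0 := by rw [← coeff_zero_eq_constantCoeff_apply, hφ, hG0]
  have hψ0 : constantCoeff ψ = 0 := by rw [← coeff_zero_eq_constantCoeff_apply, hψ, hG0]
  ext n
  induction n using Nat.strong_induction_on with
  | _ n ih => rw [hφ, hψ, hG φ ψ n hφ0 hψ0 ih]

theorem existsUnique_forall_coeff_eq_causal : ∃! φ : R⟦X⟧, ∀ n, coeff n φ = G φ n :=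
  ⟨_, coeff_causalFixCoeff hG0 hG, fun _ hψ =>
    eq_of_forall_coeff_eq_causal hG0 hG hψ (coeff_causalFixCoeff hG0 hG)⟩

end Causal

theorem coeff_pow_eq_of_coeff_eq {R : Type*} [CommRing R] {φ ψ : R⟦X⟧} {n m : ℕ}
    (hφ : constantCoeff φ = 0) (hψ : constantCoeff ψ = 0)
    (h : ∀ k < n, coeff k φ = coeff k ψ) (hm : 2 ≤ m) :
    coeff n (φ ^ m) = coeff n (ψ ^ m) := by
  have hdvd : (X : R⟦X⟧) ^ n ∣ φ - ψ :=
    X_pow_dvd_iff.2 fun k hk => by rw [map_sub, h k hk, sub_self]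
  have := X_pow_dvd_iff.1 (pow_succ_dvd_pow_sub_pow (X_dvd_iff.2 hφ) (X_dvd_iff.2 hψ) hdvd hm)
    n n.lt_succ_self
  rwa [map_sub, sub_eq_zero] at this

theorem inv_mul_coeff_rescale {K : Type*} [Field K] {a : K} (ha : a ≠ 0) (φ : K⟦X⟧) {n : ℕ}
    (hn : n ≠ 0) : a⁻¹ * coeff n (rescale a φ) = a ^ (n - 1) * coeff n φ := by
  rw [coeff_rescale, ← mul_assoc, pow_sub₀ a ha (Nat.one_le_iff_ne_zero.2 hn), pow_one,
    mul_comm a⁻¹]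

end PowerSeries

/-- The terms `j ≥ 1` of the functional equation at `T^n`, where
`p^{-j} (p^j)^n = p^{j(n-1)}` has cleared the denominators. -/
noncomputable def psiTail (p q : ℕ) (Ψ : ℤ⟦X⟧) (n : ℕ) : ℤ :=
  ∑ j ∈ Finset.range n, (p : ℤ) ^ ((j + 1) * (n - 1)) * coeff n (Ψ ^ q ^ (j + 1))

theorem psiTail_congr {p q : ℕ} (hq : 2 ≤ q) {Ψ Φ : ℤ⟦X⟧} {n : ℕ}
    (hΨ : constantCoeff Ψ = 0) (hΦ : constantCoeff Φ = 0)
    (h : ∀ k < n, coeff k Ψ = coeff k Φ) :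
    psiTail p q Ψ n = psiTail p q Φ n := by
  refine Finset.sum_congr rfl fun j _ => ?_
  rw [coeff_pow_eq_of_coeff_eq hΨ hΦ h (hq.trans (Nat.le_self_pow j.succ_ne_zero q))]

theorem sum_coeff_rescale_pow_eq_intCast {p : ℕ} (hp : p ≠ 0) (q : ℕ) (Ψ : ℤ⟦X⟧)
    (n : ℕ) :
    ∑ j ∈ Finset.range (n + 1), ((p : ℚ) ^ j)⁻¹ *
        coeff n ((rescale ((p : ℚ) ^ j) (Ψ.map (Int.castRingHom ℚ))) ^ (q ^ j)) =
      ((coeff n Ψ + psiTail p q Ψ n : ℤ) : ℚ) := by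
  rw [Finset.sum_range_succ', psiTail]
  have hp' : (p : ℚ) ≠ 0 := by exact_mod_cast hp
  push_cast
  simp only [pow_zero, inv_one, one_mul, rescale_one, RingHom.id_apply, pow_one, coeff_map,
    eq_intCast, ← map_pow]
  rw [add_comm]
  congr 1
  refine Finset.sum_congr rfl fun j hj => ?_
  have hn : n ≠ 0 := by have := Finset.mem_range.1 hj; omega
  rw [inv_mul_coeff_rescale (pow_ne_zero _ hp') _ hn, ← pow_mul, coeff_map]
  simp

theorem isPsi_iff {p q : ℕ} (hp : p ≠ 0) (hq : 2 ≤ q) (Ψ : ℤ⟦X⟧) :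
    IsPsi p q Ψ ↔ ∀ n, coeff n Ψ = coeff n X - psiTail p q Ψ n := by
  have hX : ∀ n, coeff n (X : ℚ⟦X⟧) = ((coeff n (X : ℤ⟦X⟧) : ℤ) : ℚ) := fun n => by
    rw [coeff_X, coeff_X]; split_ifs <;> simp
  simp only [IsPsi, sum_coeff_rescale_pow_eq_intCast hp, hX, Int.cast_inj, eq_sub_iff_add_eq]
  constructor
  · exact fun h => h.2.2
  · intro h
    have h0 : constantCoeff Ψ = 0 := by simpa [psiTail] using h 0
    refine ⟨h0, ?_, h⟩
    have htail : psiTail p q Ψ 1 = psiTail p q 0 1 :=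
      psiTail_congr hq h0 (map_zero _) fun k hk => by
        rw [Nat.lt_one_iff.1 hk, coeff_zero_eq_constantCoeff_apply, h0, map_zero]
    have h1 := h 1
    rw [htail] at h1
    simpa [psiTail, zero_pow (by positivity : q ≠ 0)] using h1

theorem existsUnique_isPsi {p q : ℕ} (hp : p ≠ 0) (hq : 2 ≤ q) : ∃! Ψ, IsPsi p q Ψ := by
  simp_rw [isPsi_iff hp hq]
  exact existsUnique_forall_coeff_eq_causal (fun Ψ => by simp [psiTail])
    fun Ψ Φ n hΨ hΦ h => by rw [psiTail_congr hq hΨ hΦ h]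

/-- there is a unique `Ψ ∈ T + T²ℤ[[T]]` with
`∑_{j=0}^∞ p^{-j} Ψ(p^j T)^{q^j} = T`. -/
theorem exists_unique_psi (p f : ℕ) (hp : p.Prime) (hf : 0 < f) (q : ℕ) (hq : q = p ^ f) :
    ∃! Ψ : PowerSeries ℤ, IsPsi p q Ψ := by
  refine existsUnique_isPsi hp.ne_zero ?_
  rw [hq]
  exact hp.two_le.trans (Nat.le_self_pow hf.ne' p)
end

section
/- The functional equation 1 = Σ_{j=0}^∞ p^{j(q^j−1)} T^{(q^j−1)/(q−1)} u(p^{j(q−1)} T)^{q^j} admits a unique solution u ∈ 1 + Tℤ[[T]], and the solution Ψ_q of the equation Σ_{j≥0} p^{−j} Ψ(p^j T)^{q^j} = T satisfies Ψ_q(T) = T · u(T^{q−1}). -/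
open PowerSeries

/-- `u ∈ 1 + Tℤ[[T]]` satisfies
`1 = ∑_{j≥0} p^{j(q^j-1)} T^{(q^j-1)/(q-1)} u(p^{j(q-1)} T)^{q^j}`, read coefficientwise
(only terms with `(q^j-1)/(q-1) ≤ n` contribute to the `n`-th coefficient, and
`(q^j-1)/(q-1) ≥ j`, so the sum over `j ∈ range (n+1)` is the full sum). -/
def IsU (p q : ℕ) (u : PowerSeries ℤ) : Prop :=
  PowerSeries.constantCoeff u = 1 ∧
  ∀ n : ℕ,
    (∑ j ∈ Finset.range (n + 1),
      (p : ℤ) ^ (j * (q ^ j - 1)) *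
        PowerSeries.coeff n
          (PowerSeries.X ^ ((q ^ j - 1) / (q - 1)) *
            (PowerSeries.rescale ((p : ℤ) ^ (j * (q - 1))) u) ^ (q ^ j)))
      = PowerSeries.coeff n (1 : PowerSeries ℤ)

/-!
Substituting `Ψ = T · u(T^{q-1})` turns the `j`-th term `p^{-j} Ψ(p^j T)^{q^j}` of the equation
for `Ψ` into `T` times the `j`-th term of the equation for `u`, evaluated at `T^{q-1}`: this is
the identity `q^j = 1 + (q-1) · (q^j-1)/(q-1)`. Hence a solution `u` yields a solution
`T · u(T^{q-1})` for `Ψ`. Both equations are triangular: the `n`-th coefficient of every term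
with `j ≥ 1` only involves coefficients of the unknown below `n`, which gives existence and
uniqueness coefficient by coefficient.
-/

open Finset

namespace Nat

theorem sub_one_mul_pow_sub_one_div (q j : ℕ) : (q - 1) * ((q ^ j - 1) / (q - 1)) = q ^ j - 1 :=
  Nat.mul_div_cancel' (by simpa using Nat.sub_dvd_pow_sub_pow q 1 j)

theorem le_pow_sub_one_div {q : ℕ} (hq : 2 ≤ q) (j : ℕ) : j ≤ (q ^ j - 1) / (q - 1) := by
  have h := one_add_mul_le_pow_of_sq_nonneg (Nat.zero_le ((q - 1) ^ 2))
    (Nat.zero_le _) (Nat.zero_le _) j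
  rw [show 1 + (q - 1) = q by omega, Nat.cast_id] at h
  rw [Nat.le_div_iff_mul_le (by omega)]
  omega

end Nat

theorem mul_dvd_pow_sub_pow {R : Type*} [CommRing R] {x y a b : R} (ha : x ∣ a) (hb : x ∣ b)
    (hab : y ∣ a - b) {N : ℕ} (hN : 2 ≤ N) : y * x ∣ a ^ N - b ^ N := by
  rw [← geom_sum₂_mul, mul_comm y x]
  refine mul_dvd_mul (Finset.dvd_sum fun i _ => ?_) hab
  rcases Nat.eq_zero_or_pos i with rfl | hi0
  · exact dvd_mul_of_dvd_right (dvd_pow hb (by omega)) _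
  · exact dvd_mul_of_dvd_left (dvd_pow ha hi0.ne') _

namespace PowerSeries

variable {R S : Type*} [CommRing R] [CommRing S]

theorem coeff_eq_of_X_pow_succ_dvd_sub {f g : R⟦X⟧} {n : ℕ} (h : X ^ (n + 1) ∣ f - g) :
    coeff n f = coeff n g := by
  rw [← sub_eq_zero, ← map_sub]
  exact X_pow_dvd_iff.1 h n n.lt_succ_self

theorem X_pow_succ_dvd_of_coeff_eq_zero {f : R⟦X⟧} {n : ℕ} (h : X ^ n ∣ f)
    (hn : coeff n f = 0) : X ^ (n + 1) ∣ f := by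
  refine X_pow_dvd_iff.2 fun m hm => ?_
  rcases Nat.lt_succ_iff_lt_or_eq.1 hm with hm | rfl
  · exact X_pow_dvd_iff.1 h m hm
  · exact hn

theorem X_pow_dvd_rescale {f : R⟦X⟧} {n : ℕ} (h : X ^ n ∣ f) (c : R) : X ^ n ∣ rescale c f :=
  X_pow_dvd_iff.2 fun m hm => by rw [coeff_rescale, X_pow_dvd_iff.1 h m hm, mul_zero]

theorem rescale_expand (r : ℕ) (hr : r ≠ 0) (c : R) (f : R⟦X⟧) :
    rescale c (expand r hr f) = expand r hr (rescale (c ^ r) f) := by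
  ext n
  simp only [coeff_rescale, coeff_expand]
  split_ifs with h
  · rw [← pow_mul, Nat.mul_div_cancel' h]
  · rw [mul_zero]

section Triangular

variable (F : ℕ → R⟦X⟧ → R⟦X⟧)

/-- The equation `∑_{j ≥ 0} F j a = c` read coefficientwise, truncated to `j ≤ n` in degree `n`
(this is the full sum when `X ^ j ∣ F j a`). -/
def TermwiseSumEq (a c : R⟦X⟧) : Prop :=
  ∀ n, ∑ j ∈ range (n + 1), coeff n (F j a) = coeff n c

variable {F}

theorem TermwiseSumEq.map {G : ℕ → S⟦X⟧ → S⟦X⟧} (φ : R →+* S)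
    (hFG : ∀ j a, map φ (F j a) = G j (map φ a)) {a c : R⟦X⟧} (h : TermwiseSumEq F a c) :
    TermwiseSumEq G (map φ a) (map φ c) := fun n => by
  simp only [← hFG, coeff_map, ← map_sum, h n]

theorem TermwiseSumEq.X_pow_dvd_sum_sub {a c : R⟦X⟧} (h : TermwiseSumEq F a c)
    (hF : ∀ j, X ^ j ∣ F j a) (N : ℕ) : X ^ N ∣ ∑ j ∈ range N, F j a - c := by
  refine X_pow_dvd_iff.2 fun m hm => ?_
  rw [map_sub, map_sum, ← Finset.sum_subset (range_subset_range.2 hm), h m, sub_self]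
  intro j _ hj
  exact X_pow_dvd_iff.1 (hF j) m (by simpa using hj)

theorem TermwiseSumEq.eq {a b c : R⟦X⟧} (hF0 : ∀ x, F 0 x = x)
    (hF : ∀ j n, X ^ n ∣ a - b → X ^ (n + 1) ∣ F (j + 1) a - F (j + 1) b)
    (ha : TermwiseSumEq F a c) (hb : TermwiseSumEq F b c) : a = b := by
  have key : ∀ n, X ^ n ∣ a - b := by
    intro n
    induction n with
    | zero => simp
    | succ n ih =>
      refine X_pow_succ_dvd_of_coeff_eq_zero ih ?_
      have ha' := ha n
      have hb' := hb n
      rw [sum_range_succ', hF0] at ha' hb'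
      have hsum : ∑ j ∈ range n, coeff n (F (j + 1) a) = ∑ j ∈ range n, coeff n (F (j + 1) b) :=
        sum_congr rfl fun j _ => coeff_eq_of_X_pow_succ_dvd_sub (hF j n ih)
      rw [map_sub, sub_eq_zero]
      linear_combination ha' - hb' - hsum
  ext n
  exact coeff_eq_of_X_pow_succ_dvd_sub (key (n + 1))

variable (F) in
noncomputable def termwiseSolution (c : R⟦X⟧) : ℕ → R
  | n => coeff n c - ∑ j ∈ range n,
      coeff n (F (j + 1) (mk fun i => if _ : i < n then termwiseSolution c i else 0))

theorem termwiseSumEq_termwiseSolution (hF0 : ∀ x, F 0 x = x)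
    (hF : ∀ j n a b, X ^ n ∣ a - b → X ^ (n + 1) ∣ F (j + 1) a - F (j + 1) b) (c : R⟦X⟧) :
    TermwiseSumEq F (mk (termwiseSolution F c)) c := by
  intro n
  have htrunc : X ^ n ∣ mk (termwiseSolution F c) -
      mk fun i => if _ : i < n then termwiseSolution F c i else 0 :=
    X_pow_dvd_iff.2 fun m hm => by simp [coeff_mk, hm]
  rw [sum_range_succ', hF0, coeff_mk, termwiseSolution,
    sum_congr rfl fun j _ => coeff_eq_of_X_pow_succ_dvd_sub (hF j n _ _ htrunc), add_sub_cancel]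

theorem existsUnique_termwiseSumEq (hF0 : ∀ x, F 0 x = x)
    (hF : ∀ j n a b, X ^ n ∣ a - b → X ^ (n + 1) ∣ F (j + 1) a - F (j + 1) b) (c : R⟦X⟧) :
    ∃! a, TermwiseSumEq F a c :=
  ⟨_, termwiseSumEq_termwiseSolution hF0 hF c,
    fun _ ha => ha.eq hF0 (fun j n => hF j n _ _) (termwiseSumEq_termwiseSolution hF0 hF c)⟩

end Triangular

section Expand

variable {r : ℕ} (hr : r ≠ 0)

theorem coeff_one_add_mul_X_mul_expand (f : R⟦X⟧) (k : ℕ) :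
    coeff (1 + k * r) (X * expand r hr f) = coeff k f := by
  rw [add_comm, coeff_succ_X_mul, mul_comm, coeff_expand_mul]

theorem coeff_X_mul_expand_eq_zero (f : R⟦X⟧) {m : ℕ} (hm : ¬∃ k, m = 1 + k * r) :
    coeff m (X * expand r hr f) = 0 := by
  rcases m with _ | m
  · exact coeff_zero_X_mul _
  · rw [coeff_succ_X_mul, coeff_expand_of_not_dvd]
    rintro ⟨k, rfl⟩
    exact hm ⟨k, by ring⟩

end Expand

end PowerSeries

section FunctionalEquations

variable (p q : ℕ) {R K : Type*} [CommRing R] [Field K]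

noncomputable def uTerm (j : ℕ) (u : R⟦X⟧) : R⟦X⟧ :=
  C ((p : R) ^ (j * (q ^ j - 1))) *
    (X ^ ((q ^ j - 1) / (q - 1)) * rescale ((p : R) ^ (j * (q - 1))) u ^ q ^ j)

noncomputable def psiTerm (j : ℕ) (φ : K⟦X⟧) : K⟦X⟧ :=
  C ((p : K) ^ j)⁻¹ * rescale ((p : K) ^ j) φ ^ q ^ j

variable {p q}

theorem uTerm_zero (u : R⟦X⟧) : uTerm p q 0 u = u := by
  simp [uTerm]

theorem psiTerm_zero (φ : K⟦X⟧) : psiTerm p q 0 φ = φ := by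
  simp [psiTerm]

theorem map_uTerm {S : Type*} [CommRing S] (f : R →+* S) (j : ℕ) (u : R⟦X⟧) :
    map f (uTerm p q j u) = uTerm p q j (map f u) := by
  simp [uTerm, ← rescale_map]

theorem X_pow_dvd_uTerm (hq : 2 ≤ q) (j : ℕ) (u : R⟦X⟧) : X ^ j ∣ uTerm p q j u :=
  dvd_mul_of_dvd_right
    (dvd_mul_of_dvd_left (pow_dvd_pow X (Nat.le_pow_sub_one_div hq j)) _) _

theorem X_pow_succ_dvd_uTerm_sub (hq : 2 ≤ q) (j n : ℕ) {u v : R⟦X⟧} (h : X ^ n ∣ u - v) :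
    X ^ (n + 1) ∣ uTerm p q (j + 1) u - uTerm p q (j + 1) v := by
  have hX : (X : R⟦X⟧) ∣ X ^ ((q ^ (j + 1) - 1) / (q - 1)) :=
    dvd_pow_self X (by have := Nat.le_pow_sub_one_div hq (j + 1); omega)
  have hpow : X ^ n ∣ rescale ((p : R) ^ ((j + 1) * (q - 1))) u ^ q ^ (j + 1) -
      rescale ((p : R) ^ ((j + 1) * (q - 1))) v ^ q ^ (j + 1) :=
    (X_pow_dvd_rescale h _).trans (by rw [map_sub]; exact sub_dvd_pow_sub_pow _ _ _)
  rw [uTerm, uTerm, ← mul_sub, ← mul_sub, pow_succ']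
  exact dvd_mul_of_dvd_right (mul_dvd_mul hX hpow) _

theorem X_pow_succ_dvd_psiTerm_sub (hq : 2 ≤ q) (j n : ℕ) {φ ψ : K⟦X⟧}
    (hφ : constantCoeff φ = 0) (hψ : constantCoeff ψ = 0) (h : X ^ n ∣ φ - ψ) :
    X ^ (n + 1) ∣ psiTerm p q (j + 1) φ - psiTerm p q (j + 1) ψ := by
  have hX {χ : K⟦X⟧} (hχ : constantCoeff χ = 0) (c : K) : X ∣ rescale c χ := by
    simpa using X_pow_dvd_rescale (n := 1) (by simpa [X_dvd_iff] using hχ) c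
  simp only [psiTerm, ← mul_sub, pow_succ]
  refine dvd_mul_of_dvd_right (mul_dvd_pow_sub_pow (hX hφ _) (hX hψ _)
    (by rw [← map_sub]; exact X_pow_dvd_rescale h _) (hq.trans (Nat.le_self_pow j.succ_ne_zero q))) _

theorem isU_iff {u : ℤ⟦X⟧} : IsU p q u ↔ TermwiseSumEq (uTerm p q) u 1 := by
  refine ⟨fun h => by simpa only [TermwiseSumEq, uTerm, coeff_C_mul] using h.2, fun h => ⟨?_, ?_⟩⟩
  · simpa [uTerm_zero] using h 0
  · simpa only [TermwiseSumEq, uTerm, coeff_C_mul] using h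

theorem IsPsi.termwiseSumEq {Ψ : ℤ⟦X⟧} (h : IsPsi p q Ψ) :
    TermwiseSumEq (psiTerm p q) (map (Int.castRingHom ℚ) Ψ) X := by
  simpa only [TermwiseSumEq, psiTerm, coeff_C_mul] using h.2.2

theorem psiTerm_X_mul_expand (hp : (p : K) ≠ 0) (hr : q - 1 ≠ 0) (j : ℕ) (u : K⟦X⟧) :
    psiTerm p q j (X * expand (q - 1) hr u) = X * expand (q - 1) hr (uTerm p q j u) := by
  have hN : q ^ j = (q - 1) * ((q ^ j - 1) / (q - 1)) + 1 := by
    have := Nat.one_le_pow j q (by omega)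
    rw [Nat.sub_one_mul_pow_sub_one_div]
    omega
  have hC : C ((p : K) ^ j)⁻¹ * C ((p : K) ^ j) ^ q ^ j = C ((p : K) ^ (j * (q ^ j - 1))) := by
    rw [← map_pow, ← map_mul, hN, pow_succ', inv_mul_cancel_left₀ (pow_ne_zero _ hp),
      Nat.add_sub_cancel, pow_mul, pow_mul, pow_mul]
  have hX : (X : K⟦X⟧) ^ q ^ j = X * X ^ ((q - 1) * ((q ^ j - 1) / (q - 1))) := by
    rw [← pow_succ', ← hN]
  simp only [psiTerm, uTerm, map_mul, rescale_X, rescale_expand, expand_C, mul_pow,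
    map_pow (expand (q - 1) hr), expand_X, ← pow_mul]
  linear_combination
    (X ^ q ^ j * expand (q - 1) hr (rescale ((p : K) ^ (j * (q - 1))) u) ^ q ^ j) * hC +
    (C ((p : K) ^ (j * (q ^ j - 1))) *
      expand (q - 1) hr (rescale ((p : K) ^ (j * (q - 1))) u) ^ q ^ j) * hX

theorem termwiseSumEq_psiTerm_X_mul_expand (hp : (p : K) ≠ 0) (hr : q - 1 ≠ 0)
    {u : K⟦X⟧} (hu : TermwiseSumEq (uTerm p q) u 1) :
    TermwiseSumEq (psiTerm p q) (X * expand (q - 1) hr u) X := by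
  intro n
  have hsum := map_dvd (expand (q - 1) hr)
    (hu.X_pow_dvd_sum_sub (fun j => X_pow_dvd_uTerm (by omega) j u) (n + 1))
  rw [map_pow, expand_X, map_sub, map_one] at hsum
  have hdvd : X ^ (n + 1) ∣ X * expand (q - 1) hr (∑ j ∈ range (n + 1), uTerm p q j u) - X :=
    calc X ^ (n + 1) ∣ (X ^ (q - 1)) ^ (n + 1) := pow_dvd_pow_of_dvd (dvd_pow_self X hr) _
      _ ∣ X * (expand (q - 1) hr (∑ j ∈ range (n + 1), uTerm p q j u) - 1) :=
          dvd_mul_of_dvd_right hsum X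
      _ = _ := by rw [mul_sub, mul_one]
  rw [← map_sum]
  simp only [psiTerm_X_mul_expand hp hr]
  rw [← mul_sum, ← map_sum]
  exact coeff_eq_of_X_pow_succ_dvd_sub hdvd

end FunctionalEquations

/-- the functional equation for `u` has a unique solution in `1 + Tℤ[[T]]`,
and the solution `Ψ_q` of the equation for `Ψ` satisfies `Ψ_q(T) = T·u(T^{q-1})`, i.e.
`coeff (1 + k(q-1)) Ψ_q = coeff k u` and all other coefficients of `Ψ_q` vanish. -/
theorem exists_unique_u_and_psi_eq (p f : ℕ) (hp : p.Prime) (hf : 0 < f)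
    (q : ℕ) (hq : q = p ^ f) :
    (∃! u : PowerSeries ℤ, IsU p q u) ∧
    (∀ u Ψ : PowerSeries ℤ, IsU p q u → IsPsi p q Ψ →
      (∀ k : ℕ, PowerSeries.coeff (1 + k * (q - 1)) Ψ = PowerSeries.coeff k u) ∧
      (∀ m : ℕ, (¬ ∃ k : ℕ, m = 1 + k * (q - 1)) → PowerSeries.coeff m Ψ = 0)) := by
  have hq2 : 2 ≤ q := hq ▸ (hp.two_le.trans (Nat.le_self_pow hf.ne' p))
  have hr : q - 1 ≠ 0 := by omega
  refine ⟨(existsUnique_congr fun u => isU_iff).2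
    (existsUnique_termwiseSumEq uTerm_zero (X_pow_succ_dvd_uTerm_sub hq2) 1), fun u Ψ hu hΨ => ?_⟩
  have hΨu : Ψ = X * expand (q - 1) hr u := by
    refine map_injective (Int.castRingHom ℚ) Int.cast_injective
      (hΨ.termwiseSumEq.eq psiTerm_zero (fun j n => X_pow_succ_dvd_psiTerm_sub hq2 j n ?_ ?_) ?_)
    · rw [← coeff_zero_eq_constantCoeff_apply, coeff_map, coeff_zero_eq_constantCoeff_apply,
        hΨ.1, map_zero]
    · simp
    · rw [map_mul, map_X, map_expand]
      exact termwiseSumEq_psiTerm_X_mul_expand (by exact_mod_cast hp.ne_zero) hr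
        (by simpa using (isU_iff.1 hu).map (Int.castRingHom ℚ) (map_uTerm _))
  subst hΨu
  exact ⟨coeff_one_add_mul_X_mul_expand hr u, fun m => coeff_X_mul_expand_eq_zero hr u⟩
end

section
/- For every a ∈ ℤ_q, Ψ_q(a) ∈ ℤ_q and Ψ_q(a) ≡ a (mod p ℤ_q). -/
/-!
Substituting `T ↦ p^j T` into `Ψ^{q^j}` multiplies its `n`-th coefficient by `p^{jn}`, so the
`n`-th coefficient of the defining identity reads `∑_j p^{j(n-1)} [Tⁿ] Ψ^{q^j} = [n = 1]` in `ℤ`.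
For `n ≥ 2` every term with `j ≥ 1` is divisible by `p^{n-1}`, hence so is the `j = 0` term
`[Tⁿ] Ψ`. On the unit ball of a complete ultrametric field with `‖p‖ < 1` the terms of `Ψ(a)`
therefore have norm at most `‖p‖^{n-1}`: the series converges, `‖Ψ(a)‖ ≤ 1`, and since
`Ψ = T + O(T²)` the tail `Ψ(a) - a` has norm at most `‖p‖`.
-/

open PowerSeries

/-- Evaluation of the entire function defined by an integral power series at a point of a
complete nonarchimedean field. -/
noncomputable def psiEval (Ψ : PowerSeries ℤ) {K : Type} [NormedField K] (x : K) : K :=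
  ∑' i : ℕ, ((PowerSeries.coeff i Ψ : ℤ) : K) * x ^ i

lemma PowerSeries.coeff_rescale_map_pow {R S : Type*} [CommSemiring R] [CommSemiring S]
    (f : R →+* S) (c : S) (Ψ : R⟦X⟧) (m n : ℕ) :
    coeff n (rescale c (Ψ.map f) ^ m) = c ^ n * f (coeff n (Ψ ^ m)) := by
  rw [← map_pow, ← map_pow, coeff_rescale, coeff_map]

namespace IsPsi

variable {p q : ℕ} {Ψ : ℤ⟦X⟧}

lemma sum_pow_mul_coeff_pow_eq_zero (hp : p ≠ 0) (hΨ : IsPsi p q Ψ) {n : ℕ} (hn : 2 ≤ n) :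
    ∑ j ∈ Finset.range (n + 1), (p : ℤ) ^ (j * (n - 1)) * coeff n (Ψ ^ q ^ j) = 0 := by
  have hpQ : (p : ℚ) ≠ 0 := Nat.cast_ne_zero.mpr hp
  have key := hΨ.2.2 n
  rw [coeff_X, if_neg (by omega)] at key
  rw [← Int.cast_inj (α := ℚ), Int.cast_zero, ← key]
  push_cast
  refine Finset.sum_congr rfl fun j _ => ?_
  rw [coeff_rescale_map_pow, eq_intCast,
    show ((p : ℚ) ^ j) ^ n = (p : ℚ) ^ j * (p : ℚ) ^ (j * (n - 1)) by
      rw [← pow_mul, ← pow_add, add_comm j, ← Nat.mul_add_one, Nat.sub_add_cancel (by omega)]]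
  field_simp

lemma pow_dvd_coeff (hp : p ≠ 0) (hΨ : IsPsi p q Ψ) (n : ℕ) :
    (p : ℤ) ^ (n - 1) ∣ coeff n Ψ := by
  rcases lt_or_ge n 2 with hn | hn
  · simp [show n - 1 = 0 by omega]
  have hsum := hΨ.sum_pow_mul_coeff_pow_eq_zero hp hn
  rw [Finset.sum_range_succ', pow_zero, pow_one, zero_mul, pow_zero, one_mul] at hsum
  have htail : (p : ℤ) ^ (n - 1) ∣
      ∑ j ∈ Finset.range n, (p : ℤ) ^ ((j + 1) * (n - 1)) * coeff n (Ψ ^ q ^ (j + 1)) :=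
    Finset.dvd_sum fun j _ => dvd_mul_of_dvd_left (pow_dvd_pow _ (by nlinarith)) _
  exact (dvd_add_right htail).mp (hsum ▸ dvd_zero _)

end IsPsi

section Ultrametric

variable {K : Type*} [NormedField K] [IsUltrametricDist K]

lemma norm_intCast_le_of_pow_dvd {p : ℤ} {m : ℕ} {c : ℤ} (h : p ^ m ∣ c) :
    ‖(c : K)‖ ≤ ‖(p : K)‖ ^ m := by
  obtain ⟨b, rfl⟩ := h
  rw [Int.cast_mul, Int.cast_pow, norm_mul, norm_pow]
  exact mul_le_of_le_one_right (by positivity) (IsUltrametricDist.norm_intCast_le_one K b)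

variable {p : ℕ} {Ψ : ℤ⟦X⟧} {a : K}

lemma norm_coeff_mul_pow_le (hdvd : ∀ n, (p : ℤ) ^ (n - 1) ∣ coeff n Ψ) (ha : ‖a‖ ≤ 1)
    (n : ℕ) : ‖((coeff n Ψ : ℤ) : K) * a ^ n‖ ≤ ‖(p : K)‖ ^ (n - 1) := by
  rw [norm_mul, norm_pow]
  have hc : ‖((coeff n Ψ : ℤ) : K)‖ ≤ ‖(p : K)‖ ^ (n - 1) := by
    simpa using norm_intCast_le_of_pow_dvd (K := K) (hdvd n)
  exact (mul_le_of_le_one_right (norm_nonneg _) (pow_le_one₀ (norm_nonneg a) ha)).trans hc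

lemma summable_coeff_mul_pow [CompleteSpace K] (hdvd : ∀ n, (p : ℤ) ^ (n - 1) ∣ coeff n Ψ)
    (hpK : ‖(p : K)‖ < 1) (ha : ‖a‖ ≤ 1) :
    Summable fun n => ((coeff n Ψ : ℤ) : K) * a ^ n := by
  refine NonarchimedeanAddGroup.summable_of_tendsto_cofinite_zero ?_
  rw [Nat.cofinite_eq_atTop]
  exact squeeze_zero_norm (norm_coeff_mul_pow_le hdvd ha)
    ((tendsto_pow_atTop_nhds_zero_of_lt_one (norm_nonneg _) hpK).comp
      (Filter.tendsto_sub_atTop_nat 1))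

end Ultrametric

section Eval

variable {K : Type} [NormedField K] [IsUltrametricDist K] {p : ℕ} {Ψ : ℤ⟦X⟧} {a : K}

lemma norm_psiEval_le_one (ha : ‖a‖ ≤ 1) : ‖psiEval Ψ a‖ ≤ 1 :=
  IsUltrametricDist.norm_tsum_le_of_forall_le fun n => by
    rw [norm_mul, norm_pow]
    exact mul_le_one₀ (IsUltrametricDist.norm_intCast_le_one K _) (by positivity)
      (pow_le_one₀ (norm_nonneg a) ha)

lemma norm_psiEval_sub_self_le [CompleteSpace K] (h0 : constantCoeff Ψ = 0)
    (h1 : coeff 1 Ψ = 1) (hdvd : ∀ n, (p : ℤ) ^ (n - 1) ∣ coeff n Ψ)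
    (hpK : ‖(p : K)‖ < 1) (ha : ‖a‖ ≤ 1) :
    ‖psiEval Ψ a - a‖ ≤ ‖(p : K)‖ := by
  have hsum := summable_coeff_mul_pow hdvd hpK ha
  have htail : psiEval Ψ a - a = ∑' n, ((coeff (n + 2) Ψ : ℤ) : K) * a ^ (n + 2) := by
    rw [psiEval, hsum.tsum_eq_zero_add, ((summable_nat_add_iff 1).mpr hsum).tsum_eq_zero_add]
    simp [h0, h1]
  rw [htail]
  refine IsUltrametricDist.norm_tsum_le_of_forall_le fun n => ?_
  exact (norm_coeff_mul_pow_le hdvd ha (n + 2)).trans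
    (pow_le_of_le_one (norm_nonneg _) hpK.le (by omega))

end Eval

/-- `ℤ_q` is the closed unit ball of `K`, and `x ≡ y (mod p ℤ_q)` means `‖x - y‖ ≤ p⁻¹`. -/
theorem psi_int_point_general (p : ℕ) (hp : p.Prime) (q : ℕ)
    (Ψ : PowerSeries ℤ) (hΨ : IsPsi p q Ψ)
    (K : Type) [NormedField K] [CompleteSpace K] (hna : IsUltrametricDist K)
    (hpK : ‖(p : K)‖ = (p : ℝ)⁻¹)
    (a : K) (ha : ‖a‖ ≤ 1) :
    Summable (fun i : ℕ => ((PowerSeries.coeff i Ψ : ℤ) : K) * a ^ i) ∧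
    ‖psiEval Ψ a‖ ≤ 1 ∧ ‖psiEval Ψ a - a‖ ≤ (p : ℝ)⁻¹ := by
  have := hna
  have hdvd := hΨ.pow_dvd_coeff hp.ne_zero
  have hp_lt_one : ‖(p : K)‖ < 1 := hpK ▸ inv_lt_one_of_one_lt₀ (by exact_mod_cast hp.one_lt)
  exact ⟨summable_coeff_mul_pow hdvd hp_lt_one ha, norm_psiEval_le_one ha,
    hpK ▸ norm_psiEval_sub_self_le hΨ.1 hΨ.2.1 hdvd hp_lt_one ha⟩

/-- for every `a ∈ ℤ_q`, `Ψ_q(a) ∈ ℤ_q` and `Ψ_q(a) ≡ a (mod p ℤ_q)`.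
Here `ℚ_q` is modelled as a complete nonarchimedean normed field `K` with `‖p‖ = p⁻¹`,
value group `p^ℤ` (unramified) and residue field contained in `𝔽_q`
(`‖x^q - x‖ ≤ p⁻¹` on the unit ball `ℤ_q = {x : ‖x‖ ≤ 1}`); `mod p ℤ_q` congruence means
the difference has norm `≤ p⁻¹`. -/
theorem psi_int_point (p f : ℕ) (hp : p.Prime) (hf : 0 < f) (q : ℕ) (hq : q = p ^ f)
    (Ψ : PowerSeries ℤ) (hΨ : IsPsi p q Ψ)
    (K : Type) [NormedField K] [CompleteSpace K] (hna : IsUltrametricDist K)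
    (hpK : ‖(p : K)‖ = (p : ℝ)⁻¹)
    (hdisc : ∀ x : K, x ≠ 0 → ∃ m : ℤ, ‖x‖ = (p : ℝ) ^ m)
    (hres : ∀ x : K, ‖x‖ ≤ 1 → ‖x ^ q - x‖ ≤ (p : ℝ)⁻¹)
    (a : K) (ha : ‖a‖ ≤ 1) :
    Summable (fun i : ℕ => ((PowerSeries.coeff i Ψ : ℤ) : K) * a ^ i) ∧
    ‖psiEval Ψ a‖ ≤ 1 ∧ ‖psiEval Ψ a - a‖ ≤ (p : ℝ)⁻¹ :=
  psi_int_point_general p hp q Ψ hΨ K hna hpK a ha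
end

section
/- Define a_0 = a ∈ ℤ_q and recursively a_i = Σ_{j=0}^{i−1} p^{j−i}(a_j^{q^{i−j−1}} − a_j^{q^{i−j}}). Then every a_i lies in ℤ_q, and for all i ≥ 0 one has a = Σ_{j=0}^{i} p^j a_j^{q^{i−j}}. -/
section Aux
variable {K : Type} [NormedField K] [IsUltrametricDist K]

lemma aux_pow_sub_pow_norm_le (x y : K) (hx : ‖x‖ ≤ 1) (hy : ‖y‖ ≤ 1) (m : ℕ) :
    ‖x ^ m - y ^ m‖ ≤ ‖x - y‖ := by
  rw [← geom_sum₂_mul x y m, norm_mul]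
  have hs : ‖∑ i ∈ Finset.range m, x ^ i * y ^ (m - 1 - i)‖ ≤ 1 :=
    IsUltrametricDist.norm_sum_le_of_forall_le_of_nonneg zero_le_one fun i _ => by
      rw [norm_mul, norm_pow, norm_pow]
      exact mul_le_one₀ (pow_le_one₀ (norm_nonneg _) hx) (pow_nonneg (norm_nonneg _) _)
        (pow_le_one₀ (norm_nonneg _) hy)
  calc ‖∑ i ∈ Finset.range m, x ^ i * y ^ (m - 1 - i)‖ * ‖x - y‖
      ≤ 1 * ‖x - y‖ := mul_le_mul_of_nonneg_right hs (norm_nonneg _)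
    _ = ‖x - y‖ := one_mul _

lemma aux_step {p : ℕ} (hp : p.Prime) (hpK : ‖(p : K)‖ = (p : ℝ)⁻¹)
    (x y : K) (hx : ‖x‖ ≤ 1) (hy : ‖y‖ ≤ 1) (hxy : ‖x - y‖ ≤ (p : ℝ)⁻¹) :
    ‖x ^ p - y ^ p‖ ≤ (p : ℝ)⁻¹ * ‖x - y‖ := by
  rw [← geom_sum₂_mul x y p, norm_mul]
  have hs : ‖∑ i ∈ Finset.range p, x ^ i * y ^ (p - 1 - i)‖ ≤ (p : ℝ)⁻¹ := by
    have key : ∑ i ∈ Finset.range p, x ^ i * y ^ (p - 1 - i)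
        = (∑ i ∈ Finset.range p, x ^ i * (y ^ (p - 1 - i) - x ^ (p - 1 - i)))
          + (p : K) * x ^ (p - 1) := by
      have term : ∀ i ∈ Finset.range p, x ^ i * y ^ (p - 1 - i)
          = x ^ i * (y ^ (p - 1 - i) - x ^ (p - 1 - i)) + x ^ (p - 1) := by
        intro i hi
        have hip : i < p := Finset.mem_range.mp hi
        have h1 : i + (p - 1 - i) = p - 1 := by omega
        rw [mul_sub, ← pow_add, h1]
        ring
      rw [Finset.sum_congr rfl term, Finset.sum_add_distrib,
        Finset.sum_const, Finset.card_range, nsmul_eq_mul]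
    rw [key]
    refine (IsUltrametricDist.norm_add_le_max _ _).trans (max_le ?_ ?_)
    · refine IsUltrametricDist.norm_sum_le_of_forall_le_of_nonneg
        (by positivity) fun i _ => ?_
      rw [norm_mul, norm_pow]
      calc ‖x‖ ^ i * ‖y ^ (p - 1 - i) - x ^ (p - 1 - i)‖
          ≤ 1 * ‖y - x‖ := mul_le_mul (pow_le_one₀ (norm_nonneg _) hx)
            (aux_pow_sub_pow_norm_le y x hy hx _) (norm_nonneg _) zero_le_one
        _ ≤ (p : ℝ)⁻¹ := by rw [one_mul, norm_sub_rev]; exact hxy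
    · rw [norm_mul, hpK, norm_pow]
      calc (p : ℝ)⁻¹ * ‖x‖ ^ (p - 1) ≤ (p : ℝ)⁻¹ * 1 :=
            mul_le_mul_of_nonneg_left (pow_le_one₀ (norm_nonneg _) hx) (by positivity)
        _ = (p : ℝ)⁻¹ := mul_one _
  exact mul_le_mul_of_nonneg_right hs (norm_nonneg _)

lemma aux_ppow {p : ℕ} (hp : p.Prime) (hpK : ‖(p : K)‖ = (p : ℝ)⁻¹)
    (x y : K) (hx : ‖x‖ ≤ 1) (hy : ‖y‖ ≤ 1) (hxy : ‖x - y‖ ≤ (p : ℝ)⁻¹) (s : ℕ) :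
    ‖x ^ p ^ s - y ^ p ^ s‖ ≤ ((p : ℝ)⁻¹) ^ s * ‖x - y‖ := by
  have hp1 : (1 : ℝ) ≤ (p : ℝ) := by exact_mod_cast hp.one_lt.le
  have hpinv1 : (p : ℝ)⁻¹ ≤ 1 := inv_le_one_of_one_le₀ hp1
  have hpinv0 : (0 : ℝ) ≤ (p : ℝ)⁻¹ := by positivity
  induction s with
  | zero => simp
  | succ s ih =>
    have hxs : ‖x ^ p ^ s‖ ≤ 1 := by
      rw [norm_pow]; exact pow_le_one₀ (norm_nonneg _) hx
    have hys : ‖y ^ p ^ s‖ ≤ 1 := by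
      rw [norm_pow]; exact pow_le_one₀ (norm_nonneg _) hy
    have hsub : ‖x ^ p ^ s - y ^ p ^ s‖ ≤ (p : ℝ)⁻¹ := by
      refine ih.trans ?_
      calc ((p : ℝ)⁻¹) ^ s * ‖x - y‖ ≤ 1 * (p : ℝ)⁻¹ :=
            mul_le_mul (pow_le_one₀ hpinv0 hpinv1) hxy (norm_nonneg _) zero_le_one
        _ = (p : ℝ)⁻¹ := one_mul _
    have := aux_step hp hpK (x ^ p ^ s) (y ^ p ^ s) hxs hys hsub
    rw [← pow_mul, ← pow_mul, ← pow_succ] at this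
    refine this.trans ?_
    rw [pow_succ, mul_comm (((p : ℝ)⁻¹) ^ s), mul_assoc]
    exact mul_le_mul_of_nonneg_left ih hpinv0

lemma aux_qiter {p f q : ℕ} (hp : p.Prime) (hf : 0 < f) (hq : q = p ^ f)
    (hpK : ‖(p : K)‖ = (p : ℝ)⁻¹)
    (hres : ∀ x : K, ‖x‖ ≤ 1 → ‖x ^ q - x‖ ≤ (p : ℝ)⁻¹)
    (x : K) (hx : ‖x‖ ≤ 1) (n : ℕ) :
    ‖x ^ q ^ (n + 1) - x ^ q ^ n‖ ≤ ((p : ℝ)⁻¹) ^ (n + 1) := by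
  have hp1 : (1 : ℝ) ≤ (p : ℝ) := by exact_mod_cast hp.one_lt.le
  have hpinv1 : (p : ℝ)⁻¹ ≤ 1 := inv_le_one_of_one_le₀ hp1
  have hpinv0 : (0 : ℝ) ≤ (p : ℝ)⁻¹ := by positivity
  induction n with
  | zero => simpa using hres x hx
  | succ n ih =>
    have hx1 : ‖x ^ q ^ (n + 1)‖ ≤ 1 := by
      rw [norm_pow]; exact pow_le_one₀ (norm_nonneg _) hx
    have hx2 : ‖x ^ q ^ n‖ ≤ 1 := by
      rw [norm_pow]; exact pow_le_one₀ (norm_nonneg _) hx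
    have hsub : ‖x ^ q ^ (n + 1) - x ^ q ^ n‖ ≤ (p : ℝ)⁻¹ := by
      refine ih.trans ?_
      calc ((p : ℝ)⁻¹) ^ (n + 1) ≤ ((p : ℝ)⁻¹) ^ 1 :=
            pow_le_pow_of_le_one hpinv0 hpinv1 (by omega)
        _ = (p : ℝ)⁻¹ := pow_one _
    have hstep := aux_ppow hp hpK (x ^ q ^ (n + 1)) (x ^ q ^ n) hx1 hx2 hsub f
    rw [← hq, ← pow_mul, ← pow_mul, ← pow_succ, ← pow_succ] at hstep
    refine hstep.trans ?_
    calc ((p : ℝ)⁻¹) ^ f * ‖x ^ q ^ (n + 1) - x ^ q ^ n‖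
        ≤ ((p : ℝ)⁻¹) ^ 1 * ((p : ℝ)⁻¹) ^ (n + 1) :=
          mul_le_mul (pow_le_pow_of_le_one hpinv0 hpinv1 hf) ih (norm_nonneg _)
            (by positivity)
      _ = ((p : ℝ)⁻¹) ^ (n + 1 + 1) := by rw [← pow_add]; ring_nf
    
end Aux

/-- with `a_0 = a ∈ ℤ_q` and
`a_i = ∑_{j=0}^{i-1} p^{j-i}(a_j^{q^{i-j-1}} - a_j^{q^{i-j}})`, every `a_i` lies in `ℤ_q`
and `a = ∑_{j=0}^{i} p^j a_j^{q^{i-j}}` for all `i ≥ 0`. Here `ℚ_q` is modelled as a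
complete nonarchimedean normed field `K` with `‖p‖ = p⁻¹`, value group `p^ℤ` and
residue field contained in `𝔽_q` (`‖x^q - x‖ ≤ p⁻¹` on the unit ball), and
`ℤ_q = {x : ‖x‖ ≤ 1}`. -/
theorem witt_digit_recursion (p f : ℕ) (hp : p.Prime) (hf : 0 < f) (q : ℕ) (hq : q = p ^ f)
    (K : Type) [NormedField K] [CompleteSpace K] (hna : IsUltrametricDist K)
    (hpK : ‖(p : K)‖ = (p : ℝ)⁻¹)
    (hdisc : ∀ x : K, x ≠ 0 → ∃ m : ℤ, ‖x‖ = (p : ℝ) ^ m)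
    (hres : ∀ x : K, ‖x‖ ≤ 1 → ‖x ^ q - x‖ ≤ (p : ℝ)⁻¹)
    (a : ℕ → K) (ha0 : ‖a 0‖ ≤ 1)
    (hrec : ∀ i : ℕ, 1 ≤ i →
      a i = ∑ j ∈ Finset.range i,
        (p : K) ^ ((j : ℤ) - (i : ℤ)) * (a j ^ q ^ (i - j - 1) - a j ^ q ^ (i - j))) :
    (∀ i : ℕ, ‖a i‖ ≤ 1) ∧
    (∀ i : ℕ, a 0 = ∑ j ∈ Finset.range (i + 1), (p : K) ^ j * a j ^ q ^ (i - j)) := by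
  haveI := hna
  have hp0 : (0 : ℝ) < (p : ℝ) := by exact_mod_cast hp.pos
  have hpinv0 : (0 : ℝ) < (p : ℝ)⁻¹ := by positivity
  have hpKne : (p : K) ≠ 0 := by
    intro h
    rw [h, norm_zero] at hpK
    exact absurd hpK.symm (ne_of_gt hpinv0)
  have hbound : ∀ i, ‖a i‖ ≤ 1 := by
    intro i
    induction i using Nat.strong_induction_on with
    | _ i ih =>
      rcases Nat.eq_zero_or_pos i with h0 | h1
      · subst h0; exact ha0
      · rw [hrec i h1]
        refine IsUltrametricDist.norm_sum_le_of_forall_le_of_nonneg zero_le_one fun j hj => ?_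
        have hji : j < i := Finset.mem_range.mp hj
        rw [norm_mul, norm_zpow, hpK]
        have hdiff : ‖a j ^ q ^ (i - j - 1) - a j ^ q ^ (i - j)‖ ≤ ((p : ℝ)⁻¹) ^ (i - j) := by
          have h := aux_qiter hp hf hq hpK hres (a j) (ih j hji) (i - j - 1)
          rw [norm_sub_rev] at h
          have hij : i - j - 1 + 1 = i - j := by omega
          rwa [hij] at h
        calc ((p : ℝ)⁻¹) ^ ((j : ℤ) - (i : ℤ)) * ‖a j ^ q ^ (i - j - 1) - a j ^ q ^ (i - j)‖
            ≤ ((p : ℝ)⁻¹) ^ ((j : ℤ) - (i : ℤ)) * ((p : ℝ)⁻¹) ^ (i - j) :=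
              mul_le_mul_of_nonneg_left hdiff (zpow_nonneg hpinv0.le _)
          _ = ((p : ℝ)⁻¹) ^ (((j : ℤ) - (i : ℤ)) + ((i - j : ℕ) : ℤ)) := by
              rw [zpow_add₀ (ne_of_gt hpinv0), zpow_natCast]
          _ = 1 := by
              have : ((j : ℤ) - (i : ℤ)) + ((i - j : ℕ) : ℤ) = 0 := by
                have : (↑(i - j) : ℤ) = (i : ℤ) - (j : ℤ) := by
                  exact_mod_cast Int.ofNat_sub hji.le
                omega
              rw [this, zpow_zero]
  refine ⟨hbound, ?_⟩
  intro i
  induction i with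
  | zero => simp
  | succ i ih =>
    rw [Finset.sum_range_succ, Nat.sub_self, pow_zero, pow_one]
    have hai : (p : K) ^ (i + 1) * a (i + 1)
        = ∑ j ∈ Finset.range (i + 1),
            (p : K) ^ j * (a j ^ q ^ (i - j) - a j ^ q ^ (i + 1 - j)) := by
      rw [hrec (i + 1) (by omega), Finset.mul_sum]
      refine Finset.sum_congr rfl fun j hj => ?_
      have hj' : j < i + 1 := Finset.mem_range.mp hj
      rw [← mul_assoc]
      have h1 : i + 1 - j - 1 = i - j := by omega
      rw [h1]
      congr 1
      have : (p : K) ^ (i + 1) * (p : K) ^ ((j : ℤ) - ((i + 1 : ℕ) : ℤ))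
          = (p : K) ^ ((((i + 1 : ℕ)) : ℤ) + ((j : ℤ) - ((i + 1 : ℕ) : ℤ))) := by
        rw [zpow_add₀ hpKne, zpow_natCast]
      rw [this]
      have h2 : (((i + 1 : ℕ)) : ℤ) + ((j : ℤ) - ((i + 1 : ℕ) : ℤ)) = (j : ℤ) := by ring
      rw [h2, zpow_natCast]
    rw [hai, ← Finset.sum_add_distrib]
    rw [ih]
    refine Finset.sum_congr rfl fun j hj => ?_
    have hj' : j < i + 1 := Finset.mem_range.mp hj
    ring
end

section
/- Let (b_i) and (c_i) be sequences in ℤ_q such that for all i ≥ 0, Σ_{j=0}^{i} p^j b_j^{q^{i−j}} ≡ Σ_{j=0}^{i} p^j c_j^{q^{i−j}} (mod p^{i+1} ℤ_q). Then b_i ≡ c_i (mod p ℤ_q) for all i ≥ 0. -/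
/-- if `(b_i)`, `(c_i)` are sequences in `ℤ_q` with
`∑_{j=0}^{i} p^j b_j^{q^{i-j}} ≡ ∑_{j=0}^{i} p^j c_j^{q^{i-j}} (mod p^{i+1} ℤ_q)` for all
`i`, then `b_i ≡ c_i (mod p ℤ_q)` for all `i`. Here `ℚ_q` is modelled as a complete
nonarchimedean normed field `K` with `‖p‖ = p⁻¹`, value group `p^ℤ` and residue field
contained in `𝔽_q`; `ℤ_q = {x : ‖x‖ ≤ 1}` and congruence `mod p^k ℤ_q` means the
difference has norm `≤ p^{-k}`. -/
theorem witt_digit_uniqueness (p f : ℕ) (hp : p.Prime) (hf : 0 < f) (q : ℕ) (hq : q = p ^ f)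
    (K : Type) [NormedField K] [CompleteSpace K] (hna : IsUltrametricDist K)
    (hpK : ‖(p : K)‖ = (p : ℝ)⁻¹)
    (hdisc : ∀ x : K, x ≠ 0 → ∃ m : ℤ, ‖x‖ = (p : ℝ) ^ m)
    (hres : ∀ x : K, ‖x‖ ≤ 1 → ‖x ^ q - x‖ ≤ (p : ℝ)⁻¹)
    (b c : ℕ → K) (hb : ∀ i, ‖b i‖ ≤ 1) (hc : ∀ i, ‖c i‖ ≤ 1)
    (hcong : ∀ i : ℕ,
      ‖(∑ j ∈ Finset.range (i + 1), (p : K) ^ j * b j ^ q ^ (i - j)) -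
        ∑ j ∈ Finset.range (i + 1), (p : K) ^ j * c j ^ q ^ (i - j)‖ ≤ (p : ℝ) ^ (-(i + 1 : ℤ))) :
    ∀ i : ℕ, ‖b i - c i‖ ≤ (p : ℝ)⁻¹ := by
  haveI := hna
  have hp0 : (0 : ℝ) < p := by exact_mod_cast hp.pos
  have hpinv_le_one : (p : ℝ)⁻¹ ≤ 1 := by
    rw [inv_le_one_iff₀]; right; exact_mod_cast hp.one_lt.le
  have hpinv_nonneg : (0 : ℝ) ≤ (p : ℝ)⁻¹ := by positivity
  -- ultrametric sub bound
  have hmax : ∀ x y : K, ‖x - y‖ ≤ max ‖x‖ ‖y‖ := by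
    intro x y
    simpa [sub_eq_add_neg] using IsUltrametricDist.norm_add_le_max x (-y)
  -- Lemma A : ‖x^n - y^n‖ ≤ ‖x - y‖ for unit-ball x, y
  have lemA : ∀ (x y : K), ‖x‖ ≤ 1 → ‖y‖ ≤ 1 → ∀ n : ℕ, ‖x ^ n - y ^ n‖ ≤ ‖x - y‖ := by
    intro x y hx hy n
    induction n with
    | zero => simp
    | succ n ih =>
      have key : x ^ (n + 1) - y ^ (n + 1) = x * (x ^ n - y ^ n) + (x - y) * y ^ n := by ring
      rw [key]
      refine (IsUltrametricDist.norm_add_le_max _ _).trans (max_le ?_ ?_)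
      · calc ‖x * (x ^ n - y ^ n)‖ = ‖x‖ * ‖x ^ n - y ^ n‖ := norm_mul _ _
          _ ≤ 1 * ‖x - y‖ := mul_le_mul hx ih (norm_nonneg _) zero_le_one
          _ = ‖x - y‖ := one_mul _
      · calc ‖(x - y) * y ^ n‖ = ‖x - y‖ * ‖y ^ n‖ := norm_mul _ _
          _ ≤ ‖x - y‖ * 1 := by
              refine mul_le_mul_of_nonneg_left ?_ (norm_nonneg _)
              simpa using pow_le_one₀ (norm_nonneg y) hy
          _ = ‖x - y‖ := mul_one _
  -- Lemma B : ‖x^q - y^q‖ ≤ p⁻¹ * ‖x - y‖ when ‖x - y‖ ≤ p⁻¹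
  have lemB : ∀ (x y : K), ‖x‖ ≤ 1 → ‖y‖ ≤ 1 → ‖x - y‖ ≤ (p : ℝ)⁻¹ →
      ‖x ^ q - y ^ q‖ ≤ (p : ℝ)⁻¹ * ‖x - y‖ := by
    intro x y hx hy hxy
    have hgeom : (∑ i ∈ Finset.range q, x ^ i * y ^ (q - 1 - i)) * (x - y) = x ^ q - y ^ q :=
      geom_sum₂_mul x y q
    rw [← hgeom, norm_mul]
    refine mul_le_mul_of_nonneg_right ?_ (norm_nonneg _)
    -- bound the geometric sum by p⁻¹
    have hsplit : (∑ i ∈ Finset.range q, x ^ i * y ^ (q - 1 - i)) =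
        (∑ i ∈ Finset.range q, x ^ i * (y ^ (q - 1 - i) - x ^ (q - 1 - i))) +
        (q : K) * x ^ (q - 1) := by
      have : ∀ i ∈ Finset.range q,
          x ^ i * y ^ (q - 1 - i) =
          x ^ i * (y ^ (q - 1 - i) - x ^ (q - 1 - i)) + x ^ (q - 1) := by
        intro i hi
        have hi' : i < q := Finset.mem_range.mp hi
        have : i + (q - 1 - i) = q - 1 := by omega
        rw [mul_sub, sub_add, ← pow_add, this]
        ring
      rw [Finset.sum_congr rfl this, Finset.sum_add_distrib]
      simp [Finset.sum_const, nsmul_eq_mul]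
    rw [hsplit]
    refine (IsUltrametricDist.norm_add_le_max _ _).trans (max_le ?_ ?_)
    · refine IsUltrametricDist.norm_sum_le_of_forall_le_of_nonneg hpinv_nonneg ?_
      intro i _
      calc ‖x ^ i * (y ^ (q - 1 - i) - x ^ (q - 1 - i))‖
          = ‖x ^ i‖ * ‖y ^ (q - 1 - i) - x ^ (q - 1 - i)‖ := norm_mul _ _
        _ ≤ 1 * (p : ℝ)⁻¹ := by
            refine mul_le_mul (by simpa using pow_le_one₀ (norm_nonneg x) hx)
              (((lemA y x hy hx _).trans ?_)) (norm_nonneg _) zero_le_one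
            rwa [norm_sub_rev]
        _ = (p : ℝ)⁻¹ := one_mul _
    · have hqK : ‖(q : K)‖ ≤ (p : ℝ)⁻¹ := by
        have : ((q : K)) = ((p : K)) ^ f := by rw [hq]; push_cast; ring
        rw [this, norm_pow, hpK]
        calc ((p : ℝ)⁻¹) ^ f ≤ ((p : ℝ)⁻¹) ^ 1 :=
              pow_le_pow_of_le_one hpinv_nonneg hpinv_le_one hf
          _ = (p : ℝ)⁻¹ := pow_one _
      calc ‖(q : K) * x ^ (q - 1)‖ = ‖(q : K)‖ * ‖x ^ (q - 1)‖ := norm_mul _ _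
        _ ≤ (p : ℝ)⁻¹ * 1 := mul_le_mul hqK
            (by simpa using pow_le_one₀ (norm_nonneg x) hx) (norm_nonneg _) hpinv_nonneg
        _ = (p : ℝ)⁻¹ := mul_one _
  -- Lemma C : iterate
  have lemC : ∀ (x y : K), ‖x‖ ≤ 1 → ‖y‖ ≤ 1 → ‖x - y‖ ≤ (p : ℝ)⁻¹ → ∀ k : ℕ,
      ‖x ^ q ^ k - y ^ q ^ k‖ ≤ (p : ℝ)⁻¹ ^ (k + 1) := by
    intro x y hx hy hxy k
    induction k with
    | zero => simpa using hxy
    | succ k ih =>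
      have hxk : ‖x ^ q ^ k‖ ≤ 1 := by simpa using pow_le_one₀ (norm_nonneg x) hx
      have hyk : ‖y ^ q ^ k‖ ≤ 1 := by simpa using pow_le_one₀ (norm_nonneg y) hy
      have hxyk : ‖x ^ q ^ k - y ^ q ^ k‖ ≤ (p : ℝ)⁻¹ := by
        refine ih.trans ?_
        calc ((p : ℝ)⁻¹) ^ (k + 1) ≤ ((p : ℝ)⁻¹) ^ 1 :=
              pow_le_pow_of_le_one hpinv_nonneg hpinv_le_one (by omega)
          _ = (p : ℝ)⁻¹ := pow_one _
      have := lemB (x ^ q ^ k) (y ^ q ^ k) hxk hyk hxyk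
      rw [← pow_mul, ← pow_mul, ← pow_succ] at this
      refine this.trans ?_
      rw [pow_succ]
      calc (p : ℝ)⁻¹ * ‖x ^ q ^ k - y ^ q ^ k‖ ≤ (p : ℝ)⁻¹ * ((p:ℝ)⁻¹ ^ (k+1)) :=
            mul_le_mul_of_nonneg_left ih hpinv_nonneg
        _ = (p : ℝ)⁻¹ ^ (k + 1) * (p : ℝ)⁻¹ := by ring
  -- main strong induction
  intro i
  induction i using Nat.strong_induction_on with
  | _ i ih =>
    set T : ℕ → K := fun j => (p : K) ^ j * b j ^ q ^ (i - j) - (p : K) ^ j * c j ^ q ^ (i - j)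
      with hT
    have hsum : ∑ j ∈ Finset.range (i + 1), T j =
        (∑ j ∈ Finset.range (i + 1), (p : K) ^ j * b j ^ q ^ (i - j)) -
        ∑ j ∈ Finset.range (i + 1), (p : K) ^ j * c j ^ q ^ (i - j) := by
      rw [Finset.sum_sub_distrib]
    have hTi : T i = (p : K) ^ i * (b i - c i) := by
      simp [hT, mul_sub]
    have hTj : ∀ j ∈ Finset.range i, ‖T j‖ ≤ (p : ℝ)⁻¹ ^ (i + 1) := by
      intro j hj
      have hj' : j < i := Finset.mem_range.mp hj
      have hk : 1 ≤ i - j := by omega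
      have hbc : ‖b j - c j‖ ≤ (p : ℝ)⁻¹ := ih j hj'
      have := lemC (b j) (c j) (hb j) (hc j) hbc (i - j)
      calc ‖T j‖ = ‖(p : K) ^ j‖ * ‖b j ^ q ^ (i - j) - c j ^ q ^ (i - j)‖ := by
            rw [hT]; simp [← mul_sub, norm_mul]
        _ ≤ (p : ℝ)⁻¹ ^ j * (p : ℝ)⁻¹ ^ (i - j + 1) := by
            refine mul_le_mul ?_ this (norm_nonneg _) (by positivity)
            rw [norm_pow, hpK]
        _ = (p : ℝ)⁻¹ ^ (i + 1) := by rw [← pow_add]; congr 1; omega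
    have hbound : ‖(p : K) ^ i * (b i - c i)‖ ≤ (p : ℝ)⁻¹ ^ (i + 1) := by
      have h1 : (p : K) ^ i * (b i - c i) =
          (∑ j ∈ Finset.range (i + 1), T j) - ∑ j ∈ Finset.range i, T j := by
        rw [Finset.sum_range_succ, hTi]; ring
      rw [h1]
      refine (hmax _ _).trans (max_le ?_ ?_)
      · rw [hsum]
        refine (hcong i).trans_eq ?_
        rw [show (-(i + 1 : ℤ)) = -((i+1 : ℕ) : ℤ) by push_cast; ring,
          zpow_neg, zpow_natCast, inv_pow]
      · exact IsUltrametricDist.norm_sum_le_of_forall_le_of_nonneg (by positivity) hTj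
    have hnorm : ‖(p : K) ^ i * (b i - c i)‖ = (p : ℝ)⁻¹ ^ i * ‖b i - c i‖ := by
      rw [norm_mul, norm_pow, hpK]
    rw [hnorm, pow_succ] at hbound
    have hpi : (0 : ℝ) < (p : ℝ)⁻¹ ^ i := by positivity
    exact le_of_mul_le_mul_left hbound hpi
end

section
/- For every a ∈ ℚ_q and every nonnegative integer i, a ≡ Σ_{ℓ=0}^{−v_p(a)+i} p^{−ℓ} Ψ_q(p^ℓ a)^{q^ℓ} (mod p^{i+1} ℤ_q). -/
open PowerSeries

/-!
Write `cₙ(F)` for the coefficients of a power series `F`. The defining identity of `Ψ` reads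
`∑_j p^{j(n-1)} cₙ(Ψ^{q^j}) = δ_{n,1}`, and only the `j` with `q^j ≤ n` contribute. Its
`j = 0` term is `cₙ(Ψ)`, while for `j ≥ 1` the coefficient `cₙ(Ψ^{q^j})` only involves lower
coefficients of `Ψ`; strong induction on `n` then gives `|cₙ(Ψ)| ≤ p^{J q^J - J n}` for every
`J`. Hence all powers of `Ψ` converge everywhere and
`a - ∑_{ℓ ≤ L} p^{-ℓ} Ψ(p^ℓ a)^{q^ℓ} = ∑ₙ (∑_{ℓ > L} p^{ℓ(n-1)} cₙ(Ψ^{q^ℓ})) aⁿ`.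
The inner sum is divisible by `p^{(L+1)(n-1)}` and vanishes unless `n ≥ q^{L+1} > L + 1`, so
for `L = N + i` and `|a| ≤ p^N` every term has norm at most
`p^{-(L+1)(n-1) + N n} ≤ p^{-(i+1)}`.
-/

open Finset

namespace PowerSeries

theorem coeff_pow_eq_zero_of_lt {R : Type*} [CommSemiring R] {f : R⟦X⟧}
    (hf : constantCoeff f = 0) {m n : ℕ} (h : n < m) : coeff n (f ^ m) = 0 :=
  X_pow_dvd_iff.mp (pow_dvd_pow_of_dvd (X_dvd_iff.mpr hf) m) n h

theorem coeff_map_intCastRingHom_pow {K : Type*} [Ring K] (Ψ : ℤ⟦X⟧) (m n : ℕ) :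
    coeff n (Ψ.map (Int.castRingHom K) ^ m) = ((coeff n (Ψ ^ m) : ℤ) : K) := by
  rw [← map_pow, coeff_map, eq_intCast]

/-- `f ^ m - (trunc n f) ^ m = (f - trunc n f) * ∑ fⁱ (trunc n f)ᵐ⁻¹⁻ⁱ` is divisible by
`X ^ n * X`: both series are divisible by `X` and each summand has degree `m - 1 ≥ 1`. -/
theorem coeff_pow_eq_coeff_trunc_pow {R : Type*} [CommRing R] {f : R⟦X⟧}
    (hf : constantCoeff f = 0) {m : ℕ} (hm : 2 ≤ m) (n : ℕ) :
    coeff n (f ^ m) = coeff n ((trunc n f : R⟦X⟧) ^ m) := by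
  set g : R⟦X⟧ := ↑(trunc n f)
  have hXf : X ∣ f := X_dvd_iff.mpr hf
  have hXg : X ∣ g := X_dvd_iff.mpr <| by
    rw [← coeff_zero_eq_constantCoeff_apply, Polynomial.coeff_coe, coeff_trunc]
    split_ifs <;> simp [hf]
  have hdiff : X ^ n ∣ f - g := X_pow_dvd_iff.mpr fun k hk => by
    simp [g, Polynomial.coeff_coe, coeff_trunc, hk]
  have hsum : X ∣ ∑ i ∈ range m, f ^ i * g ^ (m - 1 - i) := by
    refine dvd_sum fun i _ => ?_
    rcases Nat.eq_zero_or_pos i with rfl | hi0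
    · exact dvd_mul_of_dvd_right (dvd_pow hXg (by omega)) _
    · exact dvd_mul_of_dvd_left (dvd_pow hXf hi0.ne') _
  have hdvd : X ^ (n + 1) ∣ f ^ m - g ^ m := by
    rw [← geom_sum₂_mul, pow_succ, mul_comm (∑ i ∈ range m, _)]
    exact mul_dvd_mul hdiff hsum
  exact sub_eq_zero.mp (by simpa using X_pow_dvd_iff.mp hdvd n (lt_add_one n))

section Ultrametric

variable {K : Type*} [NormedRing K] [IsUltrametricDist K] {ρ : ℝ}

theorem norm_coeff_mul_le_zpow (hρ : 0 < ρ) {F G : K⟦X⟧} {C D J : ℤ}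
    (hF : ∀ n : ℕ, ‖coeff n F‖ ≤ ρ ^ (C - J * n))
    (hG : ∀ n : ℕ, ‖coeff n G‖ ≤ ρ ^ (D - J * n)) (n : ℕ) :
    ‖coeff n (F * G)‖ ≤ ρ ^ (C + D - J * n) := by
  rw [coeff_mul]
  refine IsUltrametricDist.norm_sum_le_of_forall_le_of_nonneg (zpow_nonneg hρ.le _)
    fun x hx => ?_
  have hx : (x.1 : ℤ) + x.2 = n := by exact_mod_cast mem_antidiagonal.mp hx
  calc ‖coeff x.1 F * coeff x.2 G‖ ≤ ‖coeff x.1 F‖ * ‖coeff x.2 G‖ := norm_mul_le _ _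
    _ ≤ ρ ^ (C - J * x.1) * ρ ^ (D - J * x.2) :=
      mul_le_mul (hF _) (hG _) (norm_nonneg _) (zpow_nonneg hρ.le _)
    _ = ρ ^ (C + D - J * n) := by rw [← zpow_add₀ hρ.ne', ← hx]; ring_nf

theorem norm_coeff_pow_le_zpow [NormOneClass K] (hρ : 0 < ρ) {F : K⟦X⟧} {C J : ℤ}
    (hF : ∀ n : ℕ, ‖coeff n F‖ ≤ ρ ^ (C - J * n)) (m n : ℕ) :
    ‖coeff n (F ^ m)‖ ≤ ρ ^ (m * C - J * n) := by
  induction m generalizing n with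
  | zero =>
    rw [pow_zero, coeff_one]
    split_ifs with h
    · simp [h]
    · simpa using zpow_nonneg hρ.le _
  | succ m ih =>
    rw [pow_succ]
    convert norm_coeff_mul_le_zpow hρ ih hF n using 2
    push_cast
    ring

end Ultrametric

theorem norm_coeff_pow_le_zpow_of_forall_lt {K : Type*} [NormedCommRing K] [NormOneClass K]
    [IsUltrametricDist K] {ρ : ℝ} (hρ : 0 < ρ) {F : K⟦X⟧} (hF0 : constantCoeff F = 0) {n : ℕ}
    {C J : ℤ} (hF : ∀ k < n, ‖coeff k F‖ ≤ ρ ^ (C - J * k)) {m : ℕ} (hm : 2 ≤ m) :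
    ‖coeff n (F ^ m)‖ ≤ ρ ^ (m * C - J * n) := by
  rw [coeff_pow_eq_coeff_trunc_pow hF0 hm]
  refine norm_coeff_pow_le_zpow hρ (fun k => ?_) m n
  rw [Polynomial.coeff_coe, coeff_trunc]
  split_ifs with hk
  · exact hF k hk
  · simpa using zpow_nonneg hρ.le _

section Evaluation

variable {K : Type*}

theorem summable_norm_coeff_mul_pow [NormedRing K] [NormOneClass K] {ρ : ℝ} (hρ : 1 < ρ)
    {F : K⟦X⟧} (hF : ∀ J : ℕ, ∃ C : ℤ, ∀ n : ℕ, ‖coeff n F‖ ≤ ρ ^ (C - J * n)) (x : K) :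
    Summable fun n => ‖coeff n F * x ^ n‖ := by
  have hρ0 : 0 < ρ := zero_lt_one.trans hρ
  obtain ⟨N, hN⟩ := pow_unbounded_of_one_lt ‖x‖ hρ
  obtain ⟨C, hC⟩ := hF (N + 1)
  refine Summable.of_nonneg_of_le (fun n => norm_nonneg _) (fun n => ?_)
    ((summable_geometric_of_lt_one (inv_nonneg.2 hρ0.le) (inv_lt_one_of_one_lt₀ hρ)).mul_left
      (ρ ^ C))
  calc ‖coeff n F * x ^ n‖ ≤ ‖coeff n F‖ * ‖x‖ ^ n :=
        (norm_mul_le _ _).trans (mul_le_mul_of_nonneg_left (norm_pow_le _ _) (norm_nonneg _))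
    _ ≤ ρ ^ (C - (N + 1 : ℕ) * n) * (ρ ^ N) ^ n := by gcongr; exact hC n
    _ = ρ ^ C * ρ⁻¹ ^ n := by
      rw [← pow_mul, ← zpow_natCast, ← zpow_add₀ hρ0.ne', inv_pow, ← zpow_natCast,
        ← zpow_neg, ← zpow_add₀ hρ0.ne']
      push_cast
      ring_nf

theorem tsum_coeff_mul_mul_pow [NormedCommRing K] [CompleteSpace K] {F G : K⟦X⟧} {x : K}
    (hF : Summable fun n => ‖coeff n F * x ^ n‖) (hG : Summable fun n => ‖coeff n G * x ^ n‖) :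
    ∑' n, coeff n (F * G) * x ^ n = (∑' n, coeff n F * x ^ n) * ∑' n, coeff n G * x ^ n := by
  rw [tsum_mul_tsum_eq_tsum_sum_antidiagonal_of_summable_norm hF hG]
  refine tsum_congr fun n => ?_
  rw [coeff_mul, sum_mul]
  refine sum_congr rfl fun k hk => ?_
  rw [← mem_antidiagonal.mp hk, pow_add]
  ring

theorem tsum_coeff_pow_mul_pow [NormedCommRing K] [NormOneClass K] [CompleteSpace K]
    {F : K⟦X⟧} {x : K} (h : ∀ m : ℕ, Summable fun n => ‖coeff n (F ^ m) * x ^ n‖) (m : ℕ) :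
    ∑' n, coeff n (F ^ m) * x ^ n = (∑' n, coeff n F * x ^ n) ^ m := by
  induction m with
  | zero => simp [coeff_one]
  | succ m ih => rw [pow_succ, tsum_coeff_mul_mul_pow (h m) (by simpa using h 1), ih, pow_succ]

end Evaluation

end PowerSeries

/-- In the recursion for the `n`-th coefficient of `Ψ`, the `t`-th term estimated with decay
rate `J - t` still decays at rate `J` with constant `J * q ^ J`. -/
theorem decay_exponent_le {q t n : ℕ} (J : ℕ) (hq : 1 ≤ q) (ht : 1 ≤ t) (hn : 1 ≤ n) :
    (q : ℤ) ^ t * ((J - t : ℕ) * (q : ℤ) ^ (J - t)) - (J - t : ℕ) * n - t * ((n : ℤ) - 1) ≤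
      J * (q : ℤ) ^ J - J * n := by
  have hqJ : (1 : ℤ) ≤ (q : ℤ) ^ J := one_le_pow₀ (by exact_mod_cast hq)
  have hn' : (1 : ℤ) ≤ n := by exact_mod_cast hn
  rcases le_or_gt t J with htJ | hJt
  · obtain ⟨s, rfl⟩ := Nat.exists_eq_add_of_le htJ
    rw [Nat.add_sub_cancel_left, ← mul_assoc, mul_comm _ (s : ℤ), mul_assoc, ← pow_add]
    push_cast
    have ht' : (1 : ℤ) ≤ t := by exact_mod_cast ht
    nlinarith
  · rw [Nat.sub_eq_zero_of_le hJt.le]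
    have hJt' : (J : ℤ) ≤ t := by exact_mod_cast hJt.le
    push_cast
    nlinarith

theorem norm_natCast_pow_eq_zpow {K : Type*} [NormedField K] {p : ℕ}
    (hpK : ‖(p : K)‖ = (p : ℝ)⁻¹) (k : ℕ) : ‖(p : K) ^ k‖ = (p : ℝ) ^ (-(k : ℤ)) := by
  rw [norm_pow, hpK, inv_pow, ← zpow_natCast, ← zpow_neg]

namespace IsPsi

variable {p q : ℕ} {Ψ : ℤ⟦X⟧}

theorem sum_coeff_pow_eq (hΨ : IsPsi p q Ψ) (hp : p ≠ 0) (hq : 2 ≤ q) {n M : ℕ}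
    (hn : n < q ^ M) :
    ∑ j ∈ range M, (p : ℤ) ^ (j * (n - 1)) * coeff n (Ψ ^ q ^ j) = if n = 1 then 1 else 0 := by
  have hvanish : ∀ j, n < q ^ j → (p : ℤ) ^ (j * (n - 1)) * coeff n (Ψ ^ q ^ j) = 0 :=
    fun j hj => by rw [coeff_pow_eq_zero_of_lt hΨ.1 hj, mul_zero]
  rcases Nat.eq_zero_or_pos n with rfl | hn0
  · exact (sum_eq_zero fun j _ => hvanish j (pow_pos (by omega) j)).trans (by simp)
  have hvanish' : ∀ j ≥ min M (n + 1), (p : ℤ) ^ (j * (n - 1)) * coeff n (Ψ ^ q ^ j) = 0 := by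
    refine fun j hj => hvanish j ?_
    rcases min_le_iff.mp hj with hj | hj
    · exact hn.trans_le (Nat.pow_le_pow_right (by omega) hj)
    · exact (show n < j by omega).trans (Nat.lt_pow_self (by omega))
  rw [Finset.eventually_constant_sum hvanish' (min_le_left _ _),
    ← Finset.eventually_constant_sum hvanish' (min_le_right _ _)]
  have hterm : ∀ j, ((p : ℚ) ^ j)⁻¹ *
      coeff n ((rescale ((p : ℚ) ^ j) (Ψ.map (Int.castRingHom ℚ))) ^ q ^ j) =
      (((p : ℤ) ^ (j * (n - 1)) * coeff n (Ψ ^ q ^ j) : ℤ) : ℚ) := fun j => by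
    have hpj : ((p : ℚ) ^ j) ^ n = (p : ℚ) ^ j * (p : ℚ) ^ (j * (n - 1)) := by
      rw [← pow_mul, ← pow_add]; congr 1; cases n <;> simp [Nat.mul_succ] at hn0 ⊢; ring
    rw [← map_pow, coeff_rescale, ← map_pow, coeff_map, eq_intCast, hpj]
    push_cast
    field_simp
  have h := hΨ.2.2 n
  rw [sum_congr rfl fun j _ => hterm j, coeff_X] at h
  split_ifs at h ⊢ <;> exact_mod_cast h

theorem pow_dvd_sub_sum_coeff_pow (hΨ : IsPsi p q Ψ) (hp : p ≠ 0) (hq : 2 ≤ q) (L n : ℕ) :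
    (p : ℤ) ^ ((L + 1) * (n - 1)) ∣
      (if n = 1 then 1 else 0) -
        ∑ ℓ ∈ range (L + 1), (p : ℤ) ^ (ℓ * (n - 1)) * coeff n (Ψ ^ q ^ ℓ) := by
  rw [← hΨ.sum_coeff_pow_eq hp hq (M := L + 1 + n)
    ((show n ≤ L + 1 + n by omega).trans_lt (Nat.lt_pow_self (by omega))),
    ← sum_Ico_eq_sub _ (by omega)]
  exact dvd_sum fun j hj =>
    dvd_mul_of_dvd_left (pow_dvd_pow _ (Nat.mul_le_mul_right _ (mem_Ico.mp hj).1)) _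

theorem sum_coeff_map_intCastRingHom_pow_eq {K : Type*} [Ring K] (hΨ : IsPsi p q Ψ)
    (hp : p ≠ 0) (hq : 2 ≤ q) {n M : ℕ} (hn : n < q ^ M) :
    ∑ j ∈ range M, (p : K) ^ (j * (n - 1)) * coeff n (Ψ.map (Int.castRingHom K) ^ q ^ j) =
      if n = 1 then 1 else 0 := by
  have h := congrArg (Int.cast : ℤ → K) (hΨ.sum_coeff_pow_eq hp hq hn)
  push_cast [apply_ite (Int.cast : ℤ → K)] at h
  simpa only [coeff_map_intCastRingHom_pow] using h

section Norm

variable {K : Type} [NormedField K] [IsUltrametricDist K]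

theorem norm_coeff_map_le (hΨ : IsPsi p q Ψ) (hp : 1 < p) (hq : 2 ≤ q)
    (hpK : ‖(p : K)‖ = (p : ℝ)⁻¹) (n J : ℕ) :
    ‖coeff n (Ψ.map (Int.castRingHom K))‖ ≤ (p : ℝ) ^ (J * (q : ℤ) ^ J - J * n) := by
  have hp0 : (0 : ℝ) < p := by exact_mod_cast (zero_lt_one.trans hp)
  have hp1 : (1 : ℝ) ≤ p := by exact_mod_cast hp.le
  have hmap0 : constantCoeff (Ψ.map (Int.castRingHom K)) = 0 := by
    rw [← coeff_zero_eq_constantCoeff_apply, coeff_map, coeff_zero_eq_constantCoeff_apply, hΨ.1,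
      map_zero]
  induction n using Nat.strong_induction_on generalizing J with
  | _ n ih =>
  match n with
  | 0 =>
    rw [coeff_zero_eq_constantCoeff_apply, hmap0, norm_zero]
    exact zpow_nonneg hp0.le _
  | 1 =>
    rw [coeff_map, hΨ.2.1, map_one, norm_one]
    have hqJ : (1 : ℤ) ≤ (q : ℤ) ^ J := one_le_pow₀ (by exact_mod_cast (by omega : 1 ≤ q))
    exact one_le_zpow₀ hp1 (by push_cast; nlinarith)
  | n + 2 =>
    -- the `j = 0` term of the identity is the coefficient itself
    have hid := hΨ.sum_coeff_map_intCastRingHom_pow_eq (K := K) (by omega) hq (M := n + 2)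
      (Nat.lt_pow_self (by omega))
    rw [sum_range_succ', if_neg (by omega), zero_mul, pow_zero, pow_zero, pow_one, one_mul] at hid
    rw [eq_neg_of_add_eq_zero_right hid, norm_neg]
    refine IsUltrametricDist.norm_sum_le_of_forall_le_of_nonneg (zpow_nonneg hp0.le _)
      fun j _ => ?_
    set t := j + 1
    have hpow := norm_coeff_pow_le_zpow_of_forall_lt hp0 hmap0 (n := n + 2)
      (C := ((J - t : ℕ) : ℤ) * (q : ℤ) ^ (J - t)) (fun k hk => ih k hk (J - t))
      (m := q ^ t) ((Nat.le_self_pow (by omega) q).trans' hq)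
    have hexp := decay_exponent_le J (q := q) (t := t) (n := n + 2) (by omega) (by omega)
      (by omega)
    rw [norm_mul, norm_natCast_pow_eq_zpow hpK]
    refine (mul_le_mul_of_nonneg_left hpow (zpow_nonneg hp0.le _)).trans ?_
    rw [← zpow_add₀ hp0.ne']
    refine zpow_le_zpow_right₀ hp1 ?_
    push_cast at hexp ⊢
    linarith

theorem summable_norm_coeff_pow_mul_pow (hΨ : IsPsi p q Ψ) (hp : 1 < p) (hq : 2 ≤ q)
    (hpK : ‖(p : K)‖ = (p : ℝ)⁻¹) (x : K) (m : ℕ) :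
    Summable fun n => ‖((coeff n (Ψ ^ m) : ℤ) : K) * x ^ n‖ := by
  simp_rw [← coeff_map_intCastRingHom_pow]
  refine summable_norm_coeff_mul_pow (ρ := p) (by exact_mod_cast hp)
    (fun J => ⟨m * (J * q ^ J), norm_coeff_pow_le_zpow
      (by exact_mod_cast (zero_lt_one.trans hp)) (hΨ.norm_coeff_map_le hp hq hpK · J) m⟩) x

theorem hasSum_psiEval_pow [CompleteSpace K] (hΨ : IsPsi p q Ψ) (hp : 1 < p) (hq : 2 ≤ q)
    (hpK : ‖(p : K)‖ = (p : ℝ)⁻¹) (x : K) (m : ℕ) :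
    HasSum (fun n => ((coeff n (Ψ ^ m) : ℤ) : K) * x ^ n) (psiEval Ψ x ^ m) := by
  have hs := hΨ.summable_norm_coeff_pow_mul_pow hp hq hpK x
  have h := tsum_coeff_pow_mul_pow (F := Ψ.map (Int.castRingHom K)) (x := x)
    (fun m => by simpa only [coeff_map_intCastRingHom_pow] using hs m) m
  simp only [coeff_map_intCastRingHom_pow, coeff_map, eq_intCast] at h
  rw [psiEval, ← h]
  exact (hs m).of_norm.hasSum

theorem hasSum_sub_sum_psiEval [CompleteSpace K] (hΨ : IsPsi p q Ψ) (hp : 1 < p)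
    (hq : 2 ≤ q) (hpK : ‖(p : K)‖ = (p : ℝ)⁻¹) (a : K) (L : ℕ) :
    HasSum (fun n => (((if n = 1 then 1 else 0) -
        ∑ ℓ ∈ range (L + 1), (p : ℤ) ^ (ℓ * (n - 1)) * coeff n (Ψ ^ q ^ ℓ) : ℤ) : K) * a ^ n)
      (a - ∑ ℓ ∈ range (L + 1), ((p : K) ^ ℓ)⁻¹ * psiEval Ψ ((p : K) ^ ℓ * a) ^ q ^ ℓ) := by
  have hp0 : (p : K) ≠ 0 := by
    rw [← norm_ne_zero_iff, hpK]
    exact inv_ne_zero (by exact_mod_cast (by omega))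
  have hδ : HasSum (fun n => ((if n = 1 then 1 else 0 : ℤ) : K) * a ^ n) a := by
    have h := hasSum_single (f := fun n => ((if n = 1 then 1 else 0 : ℤ) : K) * a ^ n) 1
      fun n hn => by simp [hn]
    rwa [if_pos rfl, Int.cast_one, one_mul, pow_one] at h
  have hS := hasSum_sum fun ℓ (_ : ℓ ∈ range (L + 1)) =>
    (hΨ.hasSum_psiEval_pow hp hq hpK ((p : K) ^ ℓ * a) (q ^ ℓ)).mul_left ((p : K) ^ ℓ)⁻¹
  refine (hδ.sub hS).congr_fun fun n => ?_
  push_cast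
  rw [sub_mul, sum_mul]
  congr 1
  refine sum_congr rfl fun ℓ _ => ?_
  rcases n with _ | n
  · rw [coeff_pow_eq_zero_of_lt hΨ.1 (pow_pos (by omega) ℓ)]
    simp
  · rw [mul_pow, ← pow_mul, Nat.add_sub_cancel, mul_add_one, pow_add]
    field_simp
    ring

theorem norm_sub_sum_coeff_pow_mul_pow_le (hΨ : IsPsi p q Ψ) (hp : 1 < p) (hq : 2 ≤ q)
    (hpK : ‖(p : K)‖ = (p : ℝ)⁻¹) {a : K} {N : ℕ} (haN : ‖a‖ ≤ (p : ℝ) ^ (N : ℤ)) (i n : ℕ) :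
    ‖(((if n = 1 then 1 else 0) - ∑ ℓ ∈ range (N + i + 1),
        (p : ℤ) ^ (ℓ * (n - 1)) * coeff n (Ψ ^ q ^ ℓ) : ℤ) : K) * a ^ n‖ ≤
      (p : ℝ) ^ (-(i + 1 : ℤ)) := by
  have hp0 : (0 : ℝ) < p := by exact_mod_cast (zero_lt_one.trans hp)
  by_cases hn : n < q ^ (N + i + 1)
  · rw [hΨ.sum_coeff_pow_eq (by omega) hq hn, sub_self, Int.cast_zero, zero_mul, norm_zero]
    positivity
  have hNn : N + i + 1 < n := (Nat.lt_pow_self (by omega)).trans_le (not_lt.mp hn)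
  obtain ⟨w, hw⟩ := hΨ.pow_dvd_sub_sum_coeff_pow (by omega) hq (N + i) n
  rw [hw, Int.cast_mul, Int.cast_pow, Int.cast_natCast, norm_mul, norm_mul, norm_pow, hpK]
  calc (p : ℝ)⁻¹ ^ ((N + i + 1) * (n - 1)) * ‖(w : K)‖ * ‖a ^ n‖
      ≤ (p : ℝ)⁻¹ ^ ((N + i + 1) * (n - 1)) * 1 * ((p : ℝ) ^ (N : ℤ)) ^ n := by
        gcongr
        · exact IsUltrametricDist.norm_intCast_le_one K w
        · exact (norm_pow_le a n).trans (pow_le_pow_left₀ (norm_nonneg a) haN n)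
    _ = (p : ℝ) ^ (-(((N + i + 1) * (n - 1) : ℕ) : ℤ) + N * n) := by
        rw [mul_one, zpow_add₀ hp0.ne', zpow_neg, zpow_mul, zpow_natCast, inv_pow,
          zpow_natCast (_ ^ _), zpow_natCast]
    _ ≤ (p : ℝ) ^ (-(i + 1 : ℤ)) := by
        refine zpow_le_zpow_right₀ (by exact_mod_cast hp.le) ?_
        have hNn' : (N : ℤ) + i + 1 < n := by exact_mod_cast hNn
        push_cast [Nat.cast_sub (by omega : 1 ≤ n)]
        nlinarith

end Norm

end IsPsi

theorem psi_partial_sums_congruence_general (p f : ℕ) (hp : p.Prime) (hf : 0 < f)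
    (q : ℕ) (hq : q = p ^ f)
    (Ψ : PowerSeries ℤ) (hΨ : IsPsi p q Ψ)
    (K : Type) [NormedField K] [CompleteSpace K] (hna : IsUltrametricDist K)
    (hpK : ‖(p : K)‖ = (p : ℝ)⁻¹)
    (a : K) (N : ℕ) (haN : ‖a‖ ≤ (p : ℝ) ^ (N : ℤ)) (i : ℕ) :
    ‖a - ∑ ℓ ∈ Finset.range (N + i + 1),
        ((p : K) ^ ℓ)⁻¹ * (psiEval Ψ ((p : K) ^ ℓ * a)) ^ q ^ ℓ‖ ≤ (p : ℝ) ^ (-(i + 1 : ℤ)) := by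
  have hq2 : 2 ≤ q := hq ▸ hp.two_le.trans (Nat.le_self_pow hf.ne' p)
  rw [← (hΨ.hasSum_sub_sum_psiEval hp.one_lt hq2 hpK a (N + i)).tsum_eq]
  exact IsUltrametricDist.norm_tsum_le_of_forall_le_of_nonneg (by positivity)
    (hΨ.norm_sub_sum_coeff_pow_mul_pow_le hp.one_lt hq2 hpK haN i)

/-- for every `a ∈ ℚ_q` and `i ≥ 0`,
`a ≡ ∑_{ℓ=0}^{-v_p(a)+i} p^{-ℓ} Ψ_q(p^ℓ a)^{q^ℓ} (mod p^{i+1} ℤ_q)`. Here `ℚ_q` is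
modelled as a complete nonarchimedean normed field `K` with `‖p‖ = p⁻¹`, value group
`p^ℤ` and residue field contained in `𝔽_q`; `-v_p(a) ≤ N` is expressed by
`‖a‖ ≤ p^N` (including any further terms, which only sharpens the congruence), and
congruence `mod p^{i+1} ℤ_q` means the difference has norm `≤ p^{-(i+1)}`. -/
theorem psi_partial_sums_congruence (p f : ℕ) (hp : p.Prime) (hf : 0 < f)
    (q : ℕ) (hq : q = p ^ f)
    (Ψ : PowerSeries ℤ) (hΨ : IsPsi p q Ψ)
    (K : Type) [NormedField K] [CompleteSpace K] (hna : IsUltrametricDist K)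
    (hpK : ‖(p : K)‖ = (p : ℝ)⁻¹)
    (hdisc : ∀ x : K, x ≠ 0 → ∃ m : ℤ, ‖x‖ = (p : ℝ) ^ m)
    (hres : ∀ x : K, ‖x‖ ≤ 1 → ‖x ^ q - x‖ ≤ (p : ℝ)⁻¹)
    (a : K) (N : ℕ) (haN : ‖a‖ ≤ (p : ℝ) ^ (N : ℤ)) (i : ℕ) :
    ‖a - ∑ ℓ ∈ Finset.range (N + i + 1),
        ((p : K) ^ ℓ)⁻¹ * (psiEval Ψ ((p : K) ^ ℓ * a)) ^ q ^ ℓ‖ ≤ (p : ℝ) ^ (-(i + 1 : ℤ)) :=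
  psi_partial_sums_congruence_general p f hp hf q hq Ψ hΨ K hna hpK a N haN i
end

section
/- For all integers j > n ≥ 1 and all real μ > −n−1: q^n(μ+n) − (q^{n−1} + ⋯ + q + 1) < −j + (j+μ) q^j. -/
/-- for integers `j > n ≥ 1` and real `μ > -n-1`,
`q^n(μ+n) - (q^{n-1} + ⋯ + q + 1) < -j + (j+μ) q^j`. -/
theorem sigma_ell_inequality (q : ℕ) (hq : 2 ≤ q) (n j : ℕ) (hn : 1 ≤ n) (hj : n < j)
    (μ : ℝ) (hμ : -(n : ℝ) - 1 < μ) :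
    (q : ℝ) ^ n * (μ + n) - ∑ k ∈ Finset.range n, (q : ℝ) ^ k
      < -(j : ℝ) + ((j : ℝ) + μ) * (q : ℝ) ^ j := by
  have hq2 : (2:ℝ) ≤ (q:ℝ) := by exact_mod_cast hq
  have hq1 : (1:ℝ) ≤ (q:ℝ) := by linarith
  have hsum : (n:ℝ) ≤ ∑ k ∈ Finset.range n, (q : ℝ) ^ k := by
    calc (n:ℝ) = ∑ _k ∈ Finset.range n, (1:ℝ) := by simp
    _ ≤ _ := Finset.sum_le_sum fun k _ => one_le_pow₀ hq1
  have base : (q : ℝ) ^ n * (μ + n) - ∑ k ∈ Finset.range n, (q : ℝ) ^ k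
      ≤ -(n:ℝ) + ((n:ℝ) + μ) * (q:ℝ)^n := by nlinarith [hsum]
  have step : ∀ m : ℕ, n ≤ m →
      -(m:ℝ) + ((m:ℝ) + μ) * (q:ℝ)^m < -((m:ℝ)+1) + (((m:ℝ)+1) + μ) * (q:ℝ)^(m+1) := by
    intro m hm
    have hmn : (n:ℝ) ≤ m := by exact_mod_cast hm
    have hμm : (-1:ℝ) < (m:ℝ) + μ := by linarith
    have hpow : (1:ℝ) ≤ (q:ℝ)^m := one_le_pow₀ hq1
    rw [pow_succ]
    nlinarith [hpow, hμm, hq2, mul_le_mul_of_nonneg_left hq2 (by linarith : (0:ℝ) ≤ (q:ℝ)^m)]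
  have main : ∀ J : ℕ, n + 1 ≤ J →
      (q : ℝ) ^ n * (μ + n) - ∑ k ∈ Finset.range n, (q : ℝ) ^ k
        < -(J : ℝ) + ((J : ℝ) + μ) * (q : ℝ) ^ J := by
    intro J hJ
    induction J, hJ using Nat.le_induction with
    | base =>
      have := step n le_rfl
      push_cast
      push_cast at this
      linarith
    | succ m hm ih =>
      have := step m (by omega)
      push_cast
      push_cast at this ih
      linarith
  exact main j hj
end

section
/- For all integers i ≥ 1 and x ∈ ℂ_p: if v_p(x) ≥ −i then v_p(Ψ_q(x)) ≥ −(q^i − 1)/(q − 1), and if v_p(x) > −i then v_p(Ψ_q(x)) > −(q^i − 1)/(q − 1). -/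
/-
Writing `Ψ = ∑ cₙ Tⁿ` and `A_i = 1 + q + ⋯ + q^(i-1) = (q^i - 1)/(q - 1)`, the functional
equation gives the integral recurrence `∑_{j ≤ n} p^(j(n-1)) [Tⁿ] Ψ^(q^j) = [n = 1]`, and strong
induction on `n` along it shows `p^(n i) ∣ p^(A_i) cₙ` for every `i`: the `j`-th term is handled by
the induction hypothesis at level `i - j`, since `A_i = A_j + q^j A_{i-j}` and `A_j ≥ j`.
Hence `|cₙ| ≤ p^(A_i - n i)`, so every term of `Ψ(x)` has norm at most `p^(A_i) (|x| / p^i)ⁿ`,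
and the ultrametric inequality bounds the sum by its largest term.
-/

open PowerSeries

open Finset

lemma geom_sum_range_add {R : Type*} [Semiring R] (q : R) (a b : ℕ) :
    ∑ t ∈ range (a + b), q ^ t = ∑ t ∈ range a, q ^ t + q ^ a * ∑ t ∈ range b, q ^ t := by
  simp only [sum_range_add, mul_sum, pow_add]

lemma le_geom_sum_range {q : ℕ} (hq : 1 ≤ q) (i : ℕ) : i ≤ ∑ t ∈ range i, q ^ t := by
  simpa using sum_le_sum fun t (_ : t ∈ range i) ↦ Nat.one_le_pow t q hq

namespace PowerSeries

variable {R : Type*} [CommSemiring R]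

lemma coeff_pow_eq_zero_of_lt_s14 {φ : R⟦X⟧} (hφ : constantCoeff φ = 0) {k n : ℕ} (hn : n < k) :
    coeff n (φ ^ k) = 0 :=
  X_pow_dvd_iff.mp (pow_dvd_pow_of_dvd (X_dvd_iff.mpr hφ) k) n hn

/-- Each summand of `[Tⁿ] φᵏ` is a product of `k` coefficients `[Tᵐ] φ` with
`1 ≤ m ≤ n + 1 - k < N`. -/
lemma pow_dvd_coeff_pow (p : R) {φ : R⟦X⟧} (hφ : constantCoeff φ = 0) {a b N : ℕ}
    (H : ∀ m < N, p ^ (m * a) ∣ p ^ b * coeff m φ) {k : ℕ} (hk : 1 ≤ k) {n : ℕ}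
    (hn : n + 2 ≤ N + k) : p ^ (n * a) ∣ p ^ (k * b) * coeff n (φ ^ k) := by
  induction k, hk using Nat.le_induction generalizing n with
  | base => simpa using H n (by omega)
  | succ k hk ih =>
    rw [pow_succ, coeff_mul, mul_sum]
    refine dvd_sum fun ⟨u, v⟩ huv ↦ ?_
    rw [HasAntidiagonal.mem_antidiagonal] at huv
    subst huv
    rcases Nat.eq_zero_or_pos v with rfl | hv
    · simp [hφ]
    rcases lt_or_ge v N with hvN | hvN
    · rw [add_mul, pow_add, add_mul, one_mul, pow_add]
      convert mul_dvd_mul (ih (n := u) (by omega)) (H v hvN) using 1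
      ring
    · simp [coeff_pow_eq_zero_of_lt_s14 hφ (by omega : u < k)]

end PowerSeries

lemma IsPsi.coeff_recurrence {p q : ℕ} (hp : p ≠ 0) {Ψ : ℤ⟦X⟧} (hΨ : IsPsi p q Ψ) {n : ℕ}
    (hn : 1 ≤ n) :
    ∑ j ∈ range (n + 1), (p : ℤ) ^ (j * (n - 1)) * coeff n (Ψ ^ q ^ j) = coeff n (X : ℤ⟦X⟧) := by
  have hpow : ∀ j, ((p : ℚ) ^ j)⁻¹ * ((p : ℚ) ^ j) ^ n = (p : ℚ) ^ (j * (n - 1)) := by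
    intro j
    obtain ⟨m, rfl⟩ : ∃ m, n = m + 1 := ⟨n - 1, by omega⟩
    have : (p : ℚ) ^ j ≠ 0 := pow_ne_zero _ (by exact_mod_cast hp)
    rw [pow_succ, Nat.add_sub_cancel, pow_mul, mul_comm, mul_assoc, mul_inv_cancel₀ this, mul_one]
  have h := hΨ.2.2 n
  simp only [← map_pow, coeff_rescale, coeff_map, eq_intCast, ← mul_assoc, hpow] at h
  rw [← map_X (Int.castRingHom ℚ), coeff_map, eq_intCast] at h
  exact_mod_cast h

/-- The `j`-th term of the recurrence `IsPsi.coeff_recurrence`. -/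
lemma pow_dvd_pow_geom_sum_add_mul_coeff_pow {R : Type*} [CommSemiring R] (p : R) {q : ℕ}
    (hq : 2 ≤ q) {φ : R⟦X⟧} (hφ : constantCoeff φ = 0) {n : ℕ}
    (H : ∀ m < n, ∀ i, p ^ (m * i) ∣ p ^ (∑ t ∈ range i, q ^ t) * coeff m φ) {j : ℕ} (hj : 1 ≤ j)
    (i : ℕ) : p ^ (n * i) ∣ p ^ (∑ t ∈ range i, q ^ t + j * (n - 1)) * coeff n (φ ^ q ^ j) := by
  have hsplit : ∀ k, n * k ≤ k * (n - 1) + k := by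
    rcases n with _ | n
    · simp
    · exact fun k ↦ le_of_eq (by rw [Nat.add_sub_cancel]; ring)
  rcases le_or_gt j i with hji | hij
  · obtain ⟨i, rfl⟩ := Nat.exists_eq_add_of_le hji
    have hqj : 2 ≤ q ^ j := hq.trans (Nat.le_self_pow (by omega) q)
    have h := pow_dvd_coeff_pow p hφ (fun m hm ↦ H m hm i) (by omega : 1 ≤ q ^ j)
      (by omega : n + 2 ≤ n + q ^ j)
    have hexp : n * j + q ^ j * ∑ t ∈ range i, q ^ t
        ≤ ∑ t ∈ range (j + i), q ^ t + j * (n - 1) := by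
      have := le_geom_sum_range (by omega : 1 ≤ q) j
      have := hsplit j
      rw [geom_sum_range_add]
      omega
    rw [mul_add, pow_add]
    refine (mul_dvd_mul_left _ h).trans ?_
    rw [← mul_assoc, ← pow_add]
    exact mul_dvd_mul_right (pow_dvd_pow _ hexp) _
  · have hexp : n * i ≤ ∑ t ∈ range i, q ^ t + j * (n - 1) := by
      have := le_geom_sum_range (by omega : 1 ≤ q) i
      have := hsplit i
      have : i * (n - 1) ≤ j * (n - 1) := Nat.mul_le_mul_right _ hij.le
      omega
    exact (pow_dvd_pow _ hexp).mul_right _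

lemma IsPsi.pow_dvd_coeff_s14 {p q : ℕ} (hp : p ≠ 0) (hq : 2 ≤ q) {Ψ : ℤ⟦X⟧} (hΨ : IsPsi p q Ψ)
    (n i : ℕ) : (p : ℤ) ^ (n * i) ∣ (p : ℤ) ^ (∑ t ∈ range i, q ^ t) * coeff n Ψ := by
  induction n using Nat.strong_induction_on generalizing i with
  | _ n H =>
    obtain rfl | rfl | hn := (by omega : n = 0 ∨ n = 1 ∨ 2 ≤ n)
    · simp [coeff_zero_eq_constantCoeff_apply, hΨ.1]
    · simpa [hΨ.2.1] using pow_dvd_pow _ (le_geom_sum_range (by omega) i)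
    have hrec := hΨ.coeff_recurrence hp (by omega : 1 ≤ n)
    rw [sum_range_succ', coeff_X, if_neg (by omega)] at hrec
    simp only [zero_mul, pow_zero, one_mul, pow_one] at hrec
    rw [eq_neg_of_add_eq_zero_right hrec, mul_neg, dvd_neg, mul_sum]
    refine dvd_sum fun j _ ↦ ?_
    rw [← mul_assoc, ← pow_add]
    exact pow_dvd_pow_geom_sum_add_mul_coeff_pow _ hq hΨ.1 H (by omega) i

section Ultrametric

variable {K : Type*} [NormedDivisionRing K] [IsUltrametricDist K]

lemma norm_intCast_mul_pow_le_of_dvd {p : ℕ} (hp : 0 < p) (hpK : ‖(p : K)‖ = (p : ℝ)⁻¹)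
    {a b : ℕ} {c : ℤ} (h : (p : ℤ) ^ a ∣ (p : ℤ) ^ b * c) :
    ‖(c : K)‖ * (p : ℝ) ^ a ≤ (p : ℝ) ^ b := by
  obtain ⟨d, hd⟩ := h
  have hnorm := congrArg (fun z : ℤ ↦ ‖(z : K)‖) hd
  simp only [Int.cast_mul, Int.cast_pow, Int.cast_natCast, norm_mul, norm_pow, hpK,
    inv_pow] at hnorm
  have hp' : (p : ℝ) ≠ 0 := by positivity
  calc ‖(c : K)‖ * (p : ℝ) ^ a = (p : ℝ) ^ b * ‖(d : K)‖ := by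
        field_simp at hnorm ⊢
        linear_combination hnorm
    _ ≤ (p : ℝ) ^ b :=
        mul_le_of_le_one_right (by positivity) (IsUltrametricDist.norm_intCast_le_one K d)

lemma norm_tsum_mul_pow_le {c : ℕ → K} (hc0 : c 0 = 0) {M ρ : ℝ} (hM : 0 ≤ M) (hρ : 0 < ρ)
    (hc : ∀ n, ‖c n‖ * ρ ^ n ≤ M) {x : K} (hx : ‖x‖ ≤ ρ) :
    ‖∑' n, c n * x ^ n‖ ≤ M * (‖x‖ / ρ) := by
  have hr : ‖x‖ / ρ ≤ 1 := (div_le_one hρ).2 hx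
  refine IsUltrametricDist.norm_tsum_le_of_forall_le_of_nonneg (by positivity) fun n ↦ ?_
  rcases n with _ | n
  · simp only [hc0, zero_mul, norm_zero]
    positivity
  calc ‖c (n + 1) * x ^ (n + 1)‖ = ‖c (n + 1)‖ * ρ ^ (n + 1) * (‖x‖ / ρ) ^ (n + 1) := by
        rw [norm_mul, norm_pow, div_pow, mul_assoc, mul_div_cancel₀ _ (by positivity)]
    _ ≤ M * (‖x‖ / ρ) :=
        mul_le_mul (hc _) (pow_le_of_le_one (by positivity) hr (by omega)) (by positivity) hM

end Ultrametric

theorem psi_growth_estimate_general (p f : ℕ) (hp : p.Prime) (hf : 0 < f)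
    (q : ℕ) (hq : q = p ^ f)
    (Ψ : PowerSeries ℤ) (hΨ : IsPsi p q Ψ)
    (K : Type) [NormedField K]
    (hna : IsUltrametricDist K) (hpK : ‖(p : K)‖ = (p : ℝ)⁻¹) :
    ∀ i : ℕ, 1 ≤ i → ∀ x : K,
      (‖x‖ ≤ (p : ℝ) ^ (i : ℤ) →
        ‖psiEval Ψ x‖ ≤ (p : ℝ) ^ (((q ^ i - 1) / (q - 1) : ℕ) : ℤ)) ∧
      (‖x‖ < (p : ℝ) ^ (i : ℤ) →
        ‖psiEval Ψ x‖ < (p : ℝ) ^ (((q ^ i - 1) / (q - 1) : ℕ) : ℤ)) := by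
  intro i _ x
  have hq2 : 2 ≤ q := hq ▸ hp.two_le.trans (Nat.le_self_pow hf.ne' p)
  have hp0 : (0 : ℝ) < p := mod_cast hp.pos
  have hρ := pow_pos hp0 i
  rw [← Nat.geomSum_eq hq2, zpow_natCast, zpow_natCast]
  have hbound := norm_tsum_mul_pow_le (c := fun n ↦ ((coeff n Ψ : ℤ) : K))
    (M := (p : ℝ) ^ ∑ t ∈ range i, q ^ t) (ρ := (p : ℝ) ^ i)
    (by rw [coeff_zero_eq_constantCoeff_apply, hΨ.1, Int.cast_zero]) (pow_pos hp0 _).le hρ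
    (x := x) (fun n ↦ by
      rw [← pow_mul, mul_comm i n]
      exact norm_intCast_mul_pow_le_of_dvd hp.pos hpK (hΨ.pow_dvd_coeff_s14 hp.ne_zero hq2 n i))
  exact ⟨fun hx ↦ (hbound hx).trans
      (mul_le_of_le_one_right (pow_pos hp0 _).le ((div_le_one hρ).2 hx)),
    fun hx ↦ (hbound hx.le).trans_lt
      (mul_lt_of_lt_one_right (pow_pos hp0 _) ((div_lt_one hρ).2 hx))⟩

/-- for `i ≥ 1` and `x ∈ ℂ_p`: if `v_p(x) ≥ -i` then
`v_p(Ψ_q(x)) ≥ -(q^i-1)/(q-1)`, and if `v_p(x) > -i` then `v_p(Ψ_q(x)) > -(q^i-1)/(q-1)`.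
Here `ℂ_p` is modelled as a complete algebraically closed nonarchimedean normed field `K`
with `‖p‖ = p⁻¹`, and the conclusions read `‖Ψ_q(x)‖ ≤ p^{(q^i-1)/(q-1)}` (resp. `<`). -/
theorem psi_growth_estimate (p f : ℕ) (hp : p.Prime) (hf : 0 < f)
    (q : ℕ) (hq : q = p ^ f)
    (Ψ : PowerSeries ℤ) (hΨ : IsPsi p q Ψ)
    (K : Type) [NormedField K] [CompleteSpace K] [IsAlgClosed K]
    (hna : IsUltrametricDist K) (hpK : ‖(p : K)‖ = (p : ℝ)⁻¹) :
    ∀ i : ℕ, 1 ≤ i → ∀ x : K,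
      (‖x‖ ≤ (p : ℝ) ^ (i : ℤ) →
        ‖psiEval Ψ x‖ ≤ (p : ℝ) ^ (((q ^ i - 1) / (q - 1) : ℕ) : ℤ)) ∧
      (‖x‖ < (p : ℝ) ^ (i : ℤ) →
        ‖psiEval Ψ x‖ < (p : ℝ) ^ (((q ^ i - 1) / (q - 1) : ℕ) : ℤ)) :=
  psi_growth_estimate_general p f hp hf q hq Ψ hΨ K hna hpK
end
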